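/- arXiv:2004.00084 — 4 statements merged into one kernel-verified Lean document; each statement's English description precedes it below -/
import Mathlib

section
/- For the type A Grassmannian combinatorics: if λ ∈ 𝒫(k,n) corresponds to the binary word γ under the lattice-path bijection, then λ^1 = (λ_2-1, ..., λ_k-1, 0) (negatives replaced by 0) corresponds to the word γ^1 obtained from γ by interchanging the first 1 and the last 0 of γ (when both exist). -/
/-!
The ones of `bword n k λ` sit at the strictly increasing positions `n - k - λ j + j`. In `λ¹` a
nonempty row `j ≥ 1` becomes row `j - 1` with its one at the same position, while the empty rows
(one position to the left each) together with the new last row make the trailing block of ones one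
step longer. The empty rows of `λ` are exactly those whose one lies after the last `0` (one
direction by counting the ones available for that suffix), and the first row is nonempty because
the first `1` precedes the last `0`. So the first `1` disappears and the last `0` turns into a `1`.
-/

/-- The boundary word `D(λ)` of a partition `λ` in the `k × (n-k)` rectangle:
`true` (= 1) for a down step, `false` (= 0) for a left step, read from the top-right corner. -/
def bword (n k : ℕ) (lam : Fin k → ℕ) : Fin n → Bool :=
  fun i => decide (∃ j : Fin k, (i : ℕ) = n - k - lam j + (j : ℕ))

section

variable {n k : ℕ} {lam : Fin k → ℕ}

def downPos (n k : ℕ) (lam : Fin k → ℕ) (j : Fin k) : ℕ := n - k - lam j + j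

/-- The paper's `λ¹`: delete the first row and the first column of `λ`, and pad with a zero row. -/
def removeFirstHook (lam : Fin k → ℕ) : Fin k → ℕ :=
  fun i => if h : (i : ℕ) + 1 < k then lam ⟨(i : ℕ) + 1, h⟩ - 1 else 0

theorem bword_eq_true_iff {x : Fin n} :
    bword n k lam x = true ↔ ∃ j, (x : ℕ) = downPos n k lam j :=
  decide_eq_true_iff

theorem downPos_strictMono (hanti : Antitone lam) : StrictMono (downPos n k lam) := by
  intro i j hij
  have := hanti hij.le
  simp only [downPos]
  omega

theorem eq_downPos_head_of_forall_lt (hanti : Antitone lam) (h0 : 0 < k) {p : ℕ}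
    (hp : ∃ j, p = downPos n k lam j) (hp0 : ∀ x < p, ∀ j, x ≠ downPos n k lam j) :
    p = downPos n k lam ⟨0, h0⟩ := by
  obtain ⟨j, rfl⟩ := hp
  refine le_antisymm ?_ ((downPos_strictMono hanti).monotone (Fin.le_def.2 (Nat.zero_le _)))
  by_contra! hlt
  exact hp0 _ hlt _ rfl

theorem exists_downPos_eq_of_eq_zero (hk : k ≤ n) (hanti : Antitone lam) {j : Fin k}
    (hj : lam j = 0) {x : ℕ} (hjx : downPos n k lam j ≤ x) (hx : x < n) :
    ∃ j', x = downPos n k lam j' := by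
  simp only [downPos, hj] at hjx
  have hj' : lam ⟨x - (n - k), by omega⟩ = 0 :=
    Nat.eq_zero_of_le_zero (hj ▸ hanti (Fin.mk_le_mk.2 (by omega)))
  exact ⟨⟨x - (n - k), by omega⟩, by simp only [downPos, hj']; omega⟩

-- The `n - downPos j` positions from `downPos j` on are all ones, but only `k - j` ones remain.
theorem eq_zero_of_forall_exists_downPos (hanti : Antitone lam) (hbd : ∀ i, lam i ≤ n - k)
    (j : Fin k) (hones : ∀ x, downPos n k lam j ≤ x → x < n → ∃ j', x = downPos n k lam j') :
    lam j = 0 := by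
  have hsub : Finset.Ico (downPos n k lam j) n ⊆ (Finset.Ici j).image (downPos n k lam) := by
    intro x hx
    obtain ⟨hjx, hxn⟩ := Finset.mem_Ico.1 hx
    obtain ⟨j', rfl⟩ := hones x hjx hxn
    exact Finset.mem_image_of_mem _ (Finset.mem_Ici.2 ((downPos_strictMono hanti).le_iff_le.1 hjx))
  have hcard := (Finset.card_le_card hsub).trans Finset.card_image_le
  rw [Nat.card_Ico, Fin.card_Ici] at hcard
  have := hbd j
  simp only [downPos] at hcard
  omega

theorem eq_zero_iff_lt_downPos (hk : k ≤ n) (hanti : Antitone lam) (hbd : ∀ i, lam i ≤ n - k)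
    {q : ℕ} (hq : q < n) (hq0 : ∀ j, q ≠ downPos n k lam j)
    (hq1 : ∀ x, q < x → x < n → ∃ j, x = downPos n k lam j) (j : Fin k) :
    lam j = 0 ↔ q < downPos n k lam j := by
  refine ⟨fun hj => lt_of_not_ge fun hle => ?_, fun hlt => ?_⟩
  · obtain ⟨j', hj'⟩ := exists_downPos_eq_of_eq_zero hk hanti hj hle hq
    exact hq0 j' hj'
  · exact eq_zero_of_forall_exists_downPos hanti hbd j fun x hx => hq1 x (hlt.trans_le hx)

theorem removeFirstHook_eq_zero (hanti : Antitone lam) {j : Fin k} (hj : lam j = 0) :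
    removeFirstHook lam j = 0 := by
  unfold removeFirstHook
  split_ifs with h
  · have := hanti (show j ≤ ⟨(j : ℕ) + 1, h⟩ from Fin.le_def.2 (Nat.le_succ _))
    omega
  · rfl

theorem removeFirstHook_le_head_sub_one (hanti : Antitone lam) (h0 : 0 < k) (i : Fin k) :
    removeFirstHook lam i ≤ lam ⟨0, h0⟩ - 1 := by
  unfold removeFirstHook
  split_ifs with h
  · have := hanti (show (⟨0, h0⟩ : Fin k) ≤ ⟨(i : ℕ) + 1, h⟩ from Fin.le_def.2 (Nat.zero_le _))
    omega
  · exact Nat.zero_le _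

theorem downPos_removeFirstHook_of_eq_zero (hanti : Antitone lam) {j : Fin k} (hj : lam j = 0) :
    downPos n k (removeFirstHook lam) j = downPos n k lam j := by
  simp only [downPos, removeFirstHook_eq_zero hanti hj, hj]

theorem removeFirstHook_of_val_eq_succ {i j : Fin k} (hij : (j : ℕ) = i + 1) :
    removeFirstHook lam i = lam j - 1 := by
  have h : (i : ℕ) + 1 < k := hij ▸ j.isLt
  simp only [removeFirstHook, dif_pos h, show (⟨(i : ℕ) + 1, h⟩ : Fin k) = j from Fin.ext hij.symm]

theorem downPos_removeFirstHook_of_ne_zero (hbd : ∀ i, lam i ≤ n - k) {i j : Fin k}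
    (hij : (j : ℕ) = i + 1) (hj : lam j ≠ 0) :
    downPos n k (removeFirstHook lam) i = downPos n k lam j := by
  have := hbd j
  simp only [downPos, removeFirstHook_of_val_eq_succ hij]
  omega

theorem downPos_removeFirstHook_add_one_of_eq_zero {i j : Fin k} (hij : (j : ℕ) = i + 1)
    (hj : lam j = 0) : downPos n k (removeFirstHook lam) i + 1 = downPos n k lam j := by
  simp only [downPos, removeFirstHook_of_val_eq_succ hij, hj]
  omega

theorem downPos_removeFirstHook_of_not_lt (hk : k ≤ n) {i : Fin k} (h : ¬(i : ℕ) + 1 < k) :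
    downPos n k (removeFirstHook lam) i = n - 1 := by
  simp only [downPos, removeFirstHook, dif_neg h]
  omega

theorem downPos_head_lt_downPos_removeFirstHook (hanti : Antitone lam) (hbd : ∀ i, lam i ≤ n - k)
    (h0 : 0 < k) (hhead : lam ⟨0, h0⟩ ≠ 0) (i : Fin k) :
    downPos n k lam ⟨0, h0⟩ < downPos n k (removeFirstHook lam) i := by
  have := removeFirstHook_le_head_sub_one hanti h0 i
  have := hbd ⟨0, h0⟩
  simp only [downPos]
  omega

theorem exists_downPos_removeFirstHook_eq_of_last_zero (hk : k ≤ n) (hanti : Antitone lam)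
    (hbd : ∀ i, lam i ≤ n - k) (h0 : 0 < k) {q : ℕ} (hq : q < n)
    (hq0 : ∀ j, q ≠ downPos n k lam j) (hq1 : ∀ x, q < x → x < n → ∃ j, x = downPos n k lam j)
    (hhead : downPos n k lam ⟨0, h0⟩ < q) :
    ∃ i, q = downPos n k (removeFirstHook lam) i := by
  by_cases hqn : q + 1 < n
  · obtain ⟨j, hj⟩ := hq1 (q + 1) q.lt_succ_self hqn
    have hj0 : (j : ℕ) ≠ 0 := fun hj0 => by
      have := (downPos_strictMono (n := n) hanti).monotone (Fin.le_def.2 hj0.le : j ≤ ⟨0, h0⟩)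
      omega
    obtain ⟨i, hij⟩ : ∃ i : Fin k, (j : ℕ) = i + 1 := ⟨⟨(j : ℕ) - 1, by omega⟩, by simp only; omega⟩
    have hzero := (eq_zero_iff_lt_downPos hk hanti hbd hq hq0 hq1 j).2 (by omega)
    have := downPos_removeFirstHook_add_one_of_eq_zero (n := n) hij hzero
    exact ⟨i, by omega⟩
  · refine ⟨⟨k - 1, by omega⟩, ?_⟩
    rw [downPos_removeFirstHook_of_not_lt hk (by simp only; omega)]
    omega

theorem exists_downPos_removeFirstHook_iff (hk : k ≤ n) (hanti : Antitone lam)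
    (hbd : ∀ i, lam i ≤ n - k) (h0 : 0 < k) {q : ℕ} (hq : q < n)
    (hq0 : ∀ j, q ≠ downPos n k lam j) (hq1 : ∀ x, q < x → x < n → ∃ j, x = downPos n k lam j)
    {x : ℕ} (hx : x < n) (hxp : x ≠ downPos n k lam ⟨0, h0⟩) (hxq : x ≠ q) :
    (∃ i, x = downPos n k (removeFirstHook lam) i) ↔ ∃ j, x = downPos n k lam j := by
  have hzero := eq_zero_iff_lt_downPos hk hanti hbd hq hq0 hq1
  constructor
  · rintro ⟨i, rfl⟩
    by_cases h : (i : ℕ) + 1 < k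
    · have hij : ((⟨(i : ℕ) + 1, h⟩ : Fin k) : ℕ) = i + 1 := rfl
      by_cases hj : lam ⟨(i : ℕ) + 1, h⟩ = 0
      · have := downPos_removeFirstHook_add_one_of_eq_zero (n := n) hij hj
        have := (hzero _).1 hj
        exact hq1 _ (by omega) hx
      · exact ⟨_, downPos_removeFirstHook_of_ne_zero hbd hij hj⟩
    · have := downPos_removeFirstHook_of_not_lt (lam := lam) hk h
      exact hq1 _ (by omega) hx
  · rintro ⟨j, rfl⟩
    by_cases hj : lam j = 0
    · exact ⟨j, (downPos_removeFirstHook_of_eq_zero hanti hj).symm⟩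
    · have hj0 : (j : ℕ) ≠ 0 := fun hj0 => hxp (congrArg _ (Fin.ext hj0))
      obtain ⟨i, hij⟩ : ∃ i : Fin k, (j : ℕ) = i + 1 := ⟨⟨(j : ℕ) - 1, by omega⟩, by simp only; omega⟩
      exact ⟨i, (downPos_removeFirstHook_of_ne_zero hbd hij hj).symm⟩

end

/-- if `λ ∈ 𝒫(k,n)` corresponds to the word `γ = D(λ)`, and `γ` has a first `1`
(at position `p`) and a last `0` (at position `q`), then `λ¹ = (λ₂-1,…,λ_k-1,0)` corresponds to
the word obtained from `γ` by interchanging the first `1` and the last `0`. -/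
theorem stmt_4 (n k : ℕ) (hk : k ≤ n) (lam : Fin k → ℕ)
    (hanti : ∀ i j : Fin k, i ≤ j → lam j ≤ lam i)
    (hbd : ∀ i : Fin k, lam i ≤ n - k)
    (p q : Fin n) (hpq : p < q)
    (hp1 : bword n k lam p = true) (hp0 : ∀ i : Fin n, i < p → bword n k lam i = false)
    (hq0 : bword n k lam q = false) (hq1 : ∀ i : Fin n, q < i → bword n k lam i = true) :
    bword n k (fun i => if h : (i : ℕ) + 1 < k then lam ⟨(i : ℕ) + 1, h⟩ - 1 else 0) =
      Function.update (Function.update (bword n k lam) p false) q true := by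
  have hanti : Antitone lam := fun i j hij => hanti i j hij
  have hp0 : ∀ x < (p : ℕ), ∀ j, x ≠ downPos n k lam j := fun x hx j hxj =>
    Bool.eq_false_iff.1 (hp0 ⟨x, by omega⟩ hx) (bword_eq_true_iff.2 ⟨j, hxj⟩)
  have hq0 : ∀ j, (q : ℕ) ≠ downPos n k lam j := fun j hqj =>
    Bool.eq_false_iff.1 hq0 (bword_eq_true_iff.2 ⟨j, hqj⟩)
  have hq1 : ∀ x, (q : ℕ) < x → x < n → ∃ j, x = downPos n k lam j := fun x hqx hx =>
    bword_eq_true_iff.1 (hq1 ⟨x, hx⟩ hqx)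
  obtain ⟨j, hj⟩ := bword_eq_true_iff.1 hp1
  have h0 : 0 < k := j.pos
  have hp := eq_downPos_head_of_forall_lt hanti h0 ⟨j, hj⟩ hp0
  have hhead : lam ⟨0, h0⟩ ≠ 0 := fun hzero =>
    (exists_downPos_eq_of_eq_zero hk hanti hzero (hp ▸ hpq.le) q.isLt).elim hq0
  change bword n k (removeFirstHook lam) = _
  funext x
  rcases eq_or_ne x q with rfl | hxq
  · rw [Function.update_self]
    exact bword_eq_true_iff.2
      (exists_downPos_removeFirstHook_eq_of_last_zero hk hanti hbd h0 x.isLt hq0 hq1 (hp ▸ hpq))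
  rw [Function.update_of_ne hxq]
  rcases eq_or_ne x p with rfl | hxp
  · rw [Function.update_self, Bool.eq_false_iff]
    exact fun h => (bword_eq_true_iff.1 h).elim fun i hi =>
      (downPos_head_lt_downPos_removeFirstHook hanti hbd h0 hhead i).ne (hp ▸ hi)
  rw [Function.update_of_ne hxp]
  exact Bool.eq_iff_iff.2 (bword_eq_true_iff.trans <|
    (exists_downPos_removeFirstHook_iff hk hanti hbd h0 q.isLt hq0 hq1 x.isLt
      (hp ▸ Fin.val_ne_of_ne hxp) (Fin.val_ne_of_ne hxq)).trans bword_eq_true_iff.symm)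
end

section
/- In type B_n, for 2 ≤ k ≤ n-1 and 2 ≤ j ≤ k, every positive root β with β > t_1 + t_{k+1} (in the root order) of the form β = t_1 + t_j has coroot expansion in which the simple coroot corresponding to t_k - t_{k+1} appears with coefficient 2; consequently t_1 + t_{k+1} is a maximal element of the set {β ∈ R^+ \ R_P^+ : β^∨ + ℤΔ_P^∨ ≤ d} for d = 1 (where P excludes the simple reflection s_k). -/
namespace Stmt10

/-- The standard basis vector `t_i` (1-indexed), realized in `ℝ^ℕ`. -/
def t (i : ℕ) : ℕ → ℝ := Pi.single i 1

/-- The positive roots of the root system `B_n`: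
`t_i ± t_j` for `1 ≤ i < j ≤ n` and `t_i` for `1 ≤ i ≤ n`. -/
def Rplus (n : ℕ) : Set (ℕ → ℝ) :=
  {v | (∃ i j : ℕ, 1 ≤ i ∧ i < j ∧ j ≤ n ∧ (v = t i + t j ∨ v = t i - t j)) ∨
       (∃ i : ℕ, 1 ≤ i ∧ i ≤ n ∧ v = t i)}

/-- The coroot `β^∨ = 2β/(β,β)` of a root `β` of `B_n`. -/
noncomputable def crt (n : ℕ) (v : ℕ → ℝ) : ℕ → ℝ :=
  (2 / ∑ i ∈ Finset.Icc 1 n, (v i) ^ 2) • v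

/-- For a vector `v` in the span of the simple (co)roots of `B_n`, the coefficient of the
`m`-th simple root `t_m - t_{m+1}` (equivalently, of the simple coroot `(t_m - t_{m+1})^∨`,
for `m ≤ n-1`) in the expansion of `v` is `v_1 + ⋯ + v_m`. -/
def acoeff (m : ℕ) (v : ℕ → ℝ) : ℝ := ∑ i ∈ Finset.Icc 1 m, v i

/-- The standard partial order on roots: `β ≤ β'` iff `β' - β` is a nonnegative
combination of simple roots, i.e. all coefficients of `β' - β` are nonnegative. -/
def rootLe (n : ℕ) (β β' : ℕ → ℝ) : Prop :=
  ∀ m : ℕ, 1 ≤ m → m ≤ n → 0 ≤ acoeff m (β' - β)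

lemma acoeff_single (m i : ℕ) (hi : 1 ≤ i) :
    acoeff m (t i) = if i ≤ m then 1 else 0 := by
  unfold acoeff t
  rw [Finset.sum_pi_single']
  simp [Finset.mem_Icc, hi]

lemma acoeff_pair (m i j : ℕ) (hi : 1 ≤ i) (hj : 1 ≤ j) :
    acoeff m (t i + t j) = (if i ≤ m then (1:ℝ) else 0) + (if j ≤ m then 1 else 0) := by
  unfold acoeff
  simp only [Pi.add_apply, Finset.sum_add_distrib]
  rw [← acoeff_single m i hi, ← acoeff_single m j hj]; rfl

lemma acoeff_sub (m : ℕ) (v w : ℕ → ℝ) :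
    acoeff m (v - w) = acoeff m v - acoeff m w := by
  unfold acoeff; simp [Finset.sum_sub_distrib]

lemma acoeff_smul (m : ℕ) (c : ℝ) (v : ℕ → ℝ) :
    acoeff m (c • v) = c * acoeff m v := by
  simp [acoeff, Finset.mul_sum]

lemma sum_sq_pair (n i j : ℕ) (hij : i < j) (hjn : j ≤ n) (hi : 1 ≤ i) :
    ∑ l ∈ Finset.Icc 1 n, ((t i + t j) l) ^ 2 = 2 := by
  have h : ∀ l ∈ Finset.Icc 1 n, ((t i + t j) l) ^ 2
      = (Pi.single i 1 : ℕ → ℝ) l + (Pi.single j 1 : ℕ → ℝ) l := by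
    intro l _
    simp only [t, Pi.add_apply, Pi.single_apply]
    split_ifs <;> first | omega | norm_num
  rw [Finset.sum_congr rfl h, Finset.sum_add_distrib, Finset.sum_pi_single',
    Finset.sum_pi_single', if_pos (Finset.mem_Icc.mpr ⟨hi, by omega⟩),
    if_pos (Finset.mem_Icc.mpr ⟨by omega, hjn⟩)]
  norm_num

lemma crt_pair (n i j : ℕ) (hij : i < j) (hjn : j ≤ n) (hi : 1 ≤ i) :
    crt n (t i + t j) = t i + t j := by
  unfold crt
  rw [sum_sq_pair n i j hij hjn hi]
  norm_num

lemma crt_single (n i : ℕ) (hi : 1 ≤ i) (hin : i ≤ n) :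
    crt n (t i) = (2:ℝ) • t i := by
  unfold crt
  have h : ∑ l ∈ Finset.Icc 1 n, (t i l) ^ 2 = 1 := by
    have h' : ∀ l ∈ Finset.Icc 1 n, (t i l) ^ 2 = (Pi.single i 1 : ℕ → ℝ) l := by
      intro l _
      simp only [t, Pi.single_apply]
      split_ifs <;> norm_num
    rw [Finset.sum_congr rfl h', Finset.sum_pi_single',
      if_pos (Finset.mem_Icc.mpr ⟨hi, hin⟩)]
  rw [h]; norm_num


/-- in type `B_n` with `2 ≤ k ≤ n-1` and `P` the parabolic excluding `s_k`:
every positive root `β > t_1 + t_{k+1}` of the form `β = t_1 + t_j` (`2 ≤ j ≤ k`) has the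
simple coroot `(t_k - t_{k+1})^∨` appearing with coefficient 2 in `β^∨`; consequently
`t_1 + t_{k+1}` is a maximal element of
`{β ∈ R⁺ \ R_P⁺ : coefficient of (t_k - t_{k+1})^∨ in β^∨ ≤ 1}` (the case `d = 1`). -/
theorem stmt_10 (n k : ℕ) (hk2 : 2 ≤ k) (hkn : k ≤ n - 1) :
    (∀ j : ℕ, 2 ≤ j → j ≤ k →
        rootLe n (t 1 + t (k + 1)) (t 1 + t j) → t 1 + t j ≠ t 1 + t (k + 1) →
        acoeff k (crt n (t 1 + t j)) = 2) ∧
    (t 1 + t (k + 1)) ∈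
      {β | β ∈ Rplus n ∧ acoeff k β ≠ 0 ∧ acoeff k (crt n β) ≤ 1} ∧
    (∀ β ∈ {β | β ∈ Rplus n ∧ acoeff k β ≠ 0 ∧ acoeff k (crt n β) ≤ 1},
        rootLe n (t 1 + t (k + 1)) β → β = t 1 + t (k + 1)) := by
  have hn : k + 1 ≤ n := by omega
  refine ⟨?_, ⟨?_, ?_, ?_⟩, ?_⟩
  · -- part 1
    intro j hj2 hjk _ _
    rw [crt_pair n 1 j (by omega) (by omega) le_rfl,
      acoeff_pair k 1 j le_rfl (by omega),
      if_pos (show 1 ≤ k by omega), if_pos hjk]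
    norm_num
  · -- membership in Rplus
    exact Or.inl ⟨1, k + 1, le_rfl, by omega, hn, Or.inl rfl⟩
  · -- acoeff k β ≠ 0
    rw [acoeff_pair k 1 (k + 1) le_rfl (by omega),
      if_pos (show 1 ≤ k by omega), if_neg (show ¬ k + 1 ≤ k by omega)]
    norm_num
  · -- acoeff k (crt β) ≤ 1
    rw [crt_pair n 1 (k + 1) (by omega) hn le_rfl,
      acoeff_pair k 1 (k + 1) le_rfl (by omega),
      if_pos (show 1 ≤ k by omega), if_neg (show ¬ k + 1 ≤ k by omega)]
    norm_num
  · -- maximality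
    rintro β ⟨hR, hne, hle1⟩ hle
    rcases hR with ⟨i, j, hi, hij, hjn, hor | hor⟩ | ⟨i, hi, hin, rfl⟩
    · -- β = t i + t j
      subst hor
      have hi1 : i = 1 := by
        by_contra h
        have h1 := hle 1 le_rfl (by omega)
        rw [acoeff_sub, acoeff_pair 1 i j hi (by omega),
          acoeff_pair 1 1 (k + 1) le_rfl (by omega),
          if_neg (show ¬ i ≤ 1 by omega), if_neg (show ¬ j ≤ 1 by omega),
          if_pos le_rfl, if_neg (show ¬ k + 1 ≤ 1 by omega)] at h1
        norm_num at h1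
      subst hi1
      have hjk : ¬ j ≤ k := by
        intro h
        rw [crt_pair n 1 j hij hjn le_rfl, acoeff_pair k 1 j le_rfl (by omega),
          if_pos (show 1 ≤ k by omega), if_pos h] at hle1
        norm_num at hle1
      have hjk1 : j ≤ k + 1 := by
        by_contra h
        have h2 := hle (k + 1) (by omega) hn
        rw [acoeff_sub, acoeff_pair (k + 1) 1 j le_rfl (by omega),
          acoeff_pair (k + 1) 1 (k + 1) le_rfl (by omega),
          if_pos (show 1 ≤ k + 1 by omega), if_neg (show ¬ j ≤ k + 1 by omega),
          if_pos (show k + 1 ≤ k + 1 by omega)] at h2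
        norm_num at h2
      have : j = k + 1 := by omega
      rw [this]
    · -- β = t i - t j : contradiction with rootLe at m = n
      exfalso
      have h2 := hle n (by omega) le_rfl
      have hsub : acoeff n (t i - t j) = acoeff n (t i) - acoeff n (t j) := by
        unfold acoeff; simp [Finset.sum_sub_distrib]
      rw [hor, acoeff_sub, hsub, acoeff_single n i hi, acoeff_single n j (by omega),
        acoeff_pair n 1 (k + 1) le_rfl (by omega),
        if_pos (show i ≤ n by omega), if_pos hjn,
        if_pos (show 1 ≤ n by omega), if_pos hn] at h2
      norm_num at h2
    · -- β = t i : contradiction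
      exfalso
      by_cases h : i ≤ k
      · rw [crt_single n i hi hin, acoeff_smul, acoeff_single k i hi, if_pos h] at hle1
        norm_num at hle1
      · rw [acoeff_single k i hi, if_neg h] at hne
        norm_num at hne

end Stmt10
end

section
/- Let u = (u(1) < ... < u(k)) be a minimal length representative in W^P for the hyperoctahedral group on {1,...,n,n̄,...,1̄}, corresponding to an (n-k)-strict partition λ via λ_j = 2n+1-k-u(j) + #{i < j : u(i) + u(j) > 2n+1}. If u(m) = ᾱ for some 1 ≤ α ≤ n and {1,2,...,α} ⊆ {|u(1)|,...,|u(k)|}, then λ_m = 0. -/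
open Equiv

private lemma card_filter_val {N : ℕ} (p : ℕ → Prop) [DecidablePred p] :
    (Finset.univ.filter (fun i : Fin N => p i.val)).card
      = ((Finset.range N).filter p).card := by
  simp only [Finset.card_filter]
  exact Fin.sum_univ_eq_sum_range (fun x => if p x then 1 else 0) N


/-- Lemma 7.2 of the paper: let `u ∈ W^P` be a minimal length representative of
the hyperoctahedral group on `{1,…,n,n̄,…,1̄}` (realized in `S_{2n}` on `Fin (2n)`, 0-indexed,
with `ī = Fin.rev i`), corresponding to the `(n-k)`-strict partition
`λ_j = 2n+1-k-u(j) + #{i < j : u(i)+u(j) > 2n+1}`. If `u(m) = ᾱ` with `1 ≤ α ≤ n`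
(i.e. `u(m) ≥ n` in 0-indexed values, `α-1 = (u m).rev`) and
`{1,…,α} ⊆ {|u(1)|,…,|u(k)|}`, then `λ_m = 0`. -/
theorem stmt_18 (n k : ℕ) (hk1 : 1 ≤ k) (hk : k ≤ n)
    (u : Perm (Fin (2 * n)))
    (hsigned : ∀ i : Fin (2 * n), u i.rev = (u i).rev)
    (hinc1 : ∀ i j : Fin (2 * n), i < j → (j : ℕ) < k → u i < u j)
    (hinc2 : ∀ i j : Fin (2 * n), k ≤ (i : ℕ) → i < j → (j : ℕ) < n → u i < u j)
    (hbd2 : ∀ i : Fin (2 * n), k ≤ (i : ℕ) → (i : ℕ) < n → (u i : ℕ) < n)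
    (m : Fin (2 * n)) (hm : (m : ℕ) < k)
    (hval : n ≤ (u m : ℕ))
    (hcov : ∀ c : Fin (2 * n), (c : ℕ) ≤ ((u m).rev : ℕ) →
      ∃ j : Fin (2 * n), (j : ℕ) < k ∧ min (u j : ℕ) ((u j).rev : ℕ) = (c : ℕ)) :
    (2 * (n : ℤ) + 1) - k - ((u m : ℕ) + 1) +
      (Finset.univ.filter
        (fun i : Fin (2 * n) => i < m ∧ 2 * n - 1 < (u i : ℕ) + (u m : ℕ))).card = 0 := by
  classical
  have hval_lt : ∀ i : Fin (2*n), (u i : ℕ) < 2*n := fun i => (u i).isLt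
  have hrev : ∀ i : Fin (2*n), ((u i).rev : ℕ) = 2*n - 1 - (u i : ℕ) := by
    intro i; rw [Fin.val_rev]; omega
  have hum : (u m : ℕ) < 2*n := hval_lt m
  have hmlt : (m : ℕ) < 2*n := m.isLt
  -- the "absolute value" function
  set mv : Fin (2*n) → ℕ := fun i => min (u i : ℕ) (2*n - 1 - (u i : ℕ)) with hmv
  -- injectivity of mv on the first k indices
  have hinj : ∀ i j : Fin (2*n), (i:ℕ) < k → (j:ℕ) < k → mv i = mv j → i = j := by
    intro i j hi hj hij
    have h1 := hval_lt i; have h2 := hval_lt j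
    have hd : (u i : ℕ) = (u j : ℕ) ∨ (u i : ℕ) = 2*n - 1 - (u j : ℕ) := by
      simp only [hmv] at hij; omega
    rcases hd with h | h
    · exact u.injective (Fin.val_injective h)
    · have e1 : u i = (u j).rev := Fin.val_injective (by rw [h, hrev])
      have e2 : u i = u j.rev := by rw [e1, hsigned]
      have e3 : i = j.rev := u.injective e2
      have e4 : (i : ℕ) = 2*n - ((j:ℕ) + 1) := by rw [e3, Fin.val_rev]
      omega
  -- monotonicity consequence: values below index m
  have hlt_val : ∀ i : Fin (2*n), (i:ℕ) < (m:ℕ) → (u i : ℕ) < (u m : ℕ) := by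
    intro i hi
    exact Fin.lt_def.mp (hinc1 i m (Fin.lt_def.mpr hi) hm)
  have hge_val : ∀ i : Fin (2*n), (m:ℕ) ≤ (i:ℕ) → (i:ℕ) < k → (u m : ℕ) ≤ (u i : ℕ) := by
    intro i hmi hik
    rcases eq_or_lt_of_le hmi with h | h
    · have : m = i := Fin.ext h; rw [this]
    · exact le_of_lt (Fin.lt_def.mp (hinc1 m i (Fin.lt_def.mpr h) hik))
  -- the big set B
  set B : Finset (Fin (2*n)) :=
    Finset.univ.filter (fun i : Fin (2*n) => (i:ℕ) < k ∧ mv i ≤ 2*n - 1 - (u m : ℕ)) with hB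
  have hBimage : B.image mv = Finset.range (2*n - (u m : ℕ)) := by
    ext c
    simp only [Finset.mem_image, Finset.mem_range, hB, Finset.mem_filter, Finset.mem_univ,
      true_and]
    constructor
    · rintro ⟨i, ⟨_, hle⟩, rfl⟩; omega
    · intro hc
      have hcN : c < 2*n := by omega
      obtain ⟨j, hjk, hjmin⟩ := hcov ⟨c, hcN⟩ (by rw [hrev]; simpa using (by omega : c ≤ 2*n - 1 - (u m : ℕ)))
      rw [hrev] at hjmin
      exact ⟨j, ⟨hjk, by simp only [hmv]; simp only [Fin.val_mk] at hjmin; omega⟩,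
        by simp only [hmv]; simpa using hjmin⟩
  have hBcard : B.card = 2*n - (u m : ℕ) := by
    have h1 : (B.image mv).card = B.card :=
      Finset.card_image_of_injOn (fun i hi j hj hij =>
        hinj i j ((Finset.mem_filter.mp hi).2.1 :) ((Finset.mem_filter.mp hj).2.1 :) hij)
    rw [hBimage, Finset.card_range] at h1
    omega
  -- split B at m
  have hsplit : (B.filter (fun i : Fin (2*n) => (i:ℕ) < (m:ℕ))).card
      + (B.filter (fun i : Fin (2*n) => ¬ (i:ℕ) < (m:ℕ))).card = B.card :=
    Finset.card_filter_add_card_filter_not _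
  -- the part of B with m ≤ i is exactly the interval [m, k)
  have hB2 : B.filter (fun i : Fin (2*n) => ¬ (i:ℕ) < (m:ℕ))
      = Finset.univ.filter (fun i : Fin (2*n) => (m:ℕ) ≤ (i:ℕ) ∧ (i:ℕ) < k) := by
    ext i
    simp only [hB, Finset.mem_filter, Finset.mem_univ, true_and, not_lt]
    constructor
    · rintro ⟨⟨hik, _⟩, hmi⟩; exact ⟨hmi, hik⟩
    · rintro ⟨hmi, hik⟩
      have h1 := hge_val i hmi hik
      have h2 := hval_lt i
      exact ⟨⟨hik, by simp only [hmv]; omega⟩, hmi⟩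
  have hB2card : (Finset.univ.filter
      (fun i : Fin (2*n) => (m:ℕ) ≤ (i:ℕ) ∧ (i:ℕ) < k)).card = k - (m:ℕ) := by
    rw [card_filter_val (fun x => (m:ℕ) ≤ x ∧ x < k)]
    have : (Finset.range (2*n)).filter (fun x => (m:ℕ) ≤ x ∧ x < k) = Finset.Ico (m:ℕ) k := by
      ext x; simp only [Finset.mem_filter, Finset.mem_range, Finset.mem_Ico]
      constructor
      · rintro ⟨_, h⟩; exact h
      · intro h; exact ⟨by omega, h⟩
    rw [this, Nat.card_Ico]
  -- the part of B below m is the complement (within indices < m) of the goal set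
  have hB1 : B.filter (fun i : Fin (2*n) => (i:ℕ) < (m:ℕ))
      = (Finset.univ.filter (fun i : Fin (2*n) => (i:ℕ) < (m:ℕ))).filter
          (fun i : Fin (2*n) => ¬ 2*n - 1 < (u i : ℕ) + (u m : ℕ)) := by
    ext i
    simp only [hB, Finset.mem_filter, Finset.mem_univ, true_and, not_lt]
    constructor
    · rintro ⟨⟨hik, hle⟩, him⟩
      have h1 := hlt_val i him
      have h2 := hval_lt i
      refine ⟨him, ?_⟩
      simp only [hmv] at hle; omega
    · rintro ⟨him, hsum⟩
      have h1 := hlt_val i him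
      have h2 := hval_lt i
      exact ⟨⟨by omega, by simp only [hmv]; omega⟩, him⟩
  -- the goal set, rewritten
  have hArw : Finset.univ.filter
        (fun i : Fin (2 * n) => i < m ∧ 2 * n - 1 < (u i : ℕ) + (u m : ℕ))
      = (Finset.univ.filter (fun i : Fin (2*n) => (i:ℕ) < (m:ℕ))).filter
          (fun i : Fin (2*n) => 2*n - 1 < (u i : ℕ) + (u m : ℕ)) := by
    ext i
    simp only [Finset.mem_filter, Finset.mem_univ, true_and, Fin.lt_def, and_assoc]
  have hmcard : (Finset.univ.filter (fun i : Fin (2*n) => (i:ℕ) < (m:ℕ))).card = (m:ℕ) := by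
    rw [card_filter_val (fun x => x < (m:ℕ))]
    have : (Finset.range (2*n)).filter (fun x => x < (m:ℕ)) = Finset.range (m:ℕ) := by
      ext x; simp only [Finset.mem_filter, Finset.mem_range]; omega
    rw [this, Finset.card_range]
  have hAB1 : (Finset.univ.filter
        (fun i : Fin (2 * n) => i < m ∧ 2 * n - 1 < (u i : ℕ) + (u m : ℕ))).card
      + (B.filter (fun i : Fin (2*n) => (i:ℕ) < (m:ℕ))).card = (m:ℕ) := by
    rw [hArw, hB1]
    exact (Finset.card_filter_add_card_filter_not (fun i : Fin (2*n) => 2*n - 1 < (u i : ℕ) + (u m : ℕ))).trans hmcard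
  rw [hB2, hB2card] at hsplit
  rw [hBcard] at hsplit
  omega
end

section
/- The maps λ ↦ w with w(j) = 2n+1-k-λ_j + #{i < j : λ_i + λ_j ≤ 2(n-k) + j - i} and w ↦ λ with λ_j = 2n+1-k-w(j) + #{i < j : w(i) + w(j) > 2n+1} are mutually inverse bijections between the set Λ of (n-k)-strict partitions (λ_1 ≥ ... ≥ λ_k, 2n-k ≥ λ_1 ≥ 0, and λ_{j+1} < λ_j whenever λ_j > n-k) and the set W^P of minimal length representatives of the hyperoctahedral group modulo the parabolic excluding s_k. -/
open Equiv

/-- The relation `w ↦ λ`: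
`λ_j = 2n+1-k-w(j) + #{i < j : w(i)+w(j) > 2n+1}` (values of `w` are 1-indexed via `+1`). -/
def lamFormula (n k : ℕ) (hk : k ≤ 2 * n) (lam : Fin k → ℕ) (u : Perm (Fin (2 * n))) : Prop :=
  ∀ j : Fin k, (lam j : ℤ) =
    (2 * (n : ℤ) + 1) - k - ((u (Fin.castLE hk j) : ℕ) + 1) +
      {i : Fin k | i < j ∧
        2 * n + 1 < ((u (Fin.castLE hk i) : ℕ) + 1) + ((u (Fin.castLE hk j) : ℕ) + 1)}.ncard

/-- The relation `λ ↦ w`: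
`w(j) = 2n+1-k-λ_j + #{i < j : λ_i + λ_j ≤ 2(n-k)+j-i}`. -/
def wFormula (n k : ℕ) (hk : k ≤ 2 * n) (lam : Fin k → ℕ) (u : Perm (Fin (2 * n))) : Prop :=
  ∀ j : Fin k, ((u (Fin.castLE hk j) : ℕ) + 1 : ℤ) =
    (2 * (n : ℤ) + 1) - k - lam j +
      {i : Fin k | i < j ∧ lam i + lam j ≤ 2 * (n - k) + (j : ℕ) - (i : ℕ)}.ncard

/-- The set `Λ` of `(n-k)`-strict partitions: `λ₁ ≥ … ≥ λ_k`, `2n-k ≥ λ₁`, `λ_k ≥ 0`,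
and `λ_{j+1} < λ_j` whenever `λ_j > n-k`. -/
def LamSet (n k : ℕ) : Set (Fin k → ℕ) :=
  {lam | (∀ i j : Fin k, i ≤ j → lam j ≤ lam i) ∧ (∀ i : Fin k, lam i ≤ 2 * n - k) ∧
    ∀ (j : Fin k) (h : (j : ℕ) + 1 < k), n - k < lam j → lam ⟨(j : ℕ) + 1, h⟩ < lam j}

/-- The set `W^P` of minimal length representatives of the hyperoctahedral group
(signed permutations, realized in `S_{2n}` with `ī = Fin.rev i`, 0-indexed) modulo the
parabolic excluding `s_k`: increasing on positions `1,…,k`, and increasing with values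
`≤ n` on positions `k+1,…,n`. -/
def WPSet (n k : ℕ) : Set (Perm (Fin (2 * n))) :=
  {u | (∀ i : Fin (2 * n), u i.rev = (u i).rev) ∧
    (∀ i j : Fin (2 * n), i < j → (j : ℕ) < k → u i < u j) ∧
    (∀ i j : Fin (2 * n), k ≤ (i : ℕ) → i < j → (j : ℕ) < n → u i < u j) ∧
    (∀ i : Fin (2 * n), k ≤ (i : ℕ) → (i : ℕ) < n → (u i : ℕ) < n)}


open Equiv Finset

/-- counting set for `u ↦ λ` -/
def cCt (n : ℕ) {k : ℕ} (a : Fin k → ℕ) (j : Fin k) : ℕ :=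
  (Finset.univ.filter (fun i => i < j ∧ 2*n+1 < a i + a j)).card

/-- counting set for `λ ↦ u` -/
def dCt (n : ℕ) {k : ℕ} (lam : Fin k → ℕ) (j : Fin k) : ℕ :=
  (Finset.univ.filter (fun i => i < j ∧ lam i + lam j ≤ 2*(n-k) + (j:ℕ) - (i:ℕ))).card

lemma ncard_eq_filter_card {k : ℕ} (P : Fin k → Prop) [DecidablePred P] :
    {i : Fin k | P i}.ncard = (Finset.univ.filter P).card := by
  rw [← Set.ncard_coe_finset]
  congr 1
  ext i
  simp

section Backward

variable {n k : ℕ} {a : Fin k → ℕ}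

lemma lemB1 (hmono : StrictMono a) (h1 : ∀ j, 1 ≤ a j) (h2 : ∀ j, a j ≤ 2*n)
    (hpair : ∀ i j, a i + a j ≠ 2*n+1) (j : Fin k) :
    k + a j ≤ 2*n + 1 + cCt n a j := by
  classical
  set U := Finset.univ.filter (fun i : Fin k => i < j ∧ a i + a j ≤ 2*n) with hU
  set V := Finset.univ.filter (fun i : Fin k => j < i) with hV
  set C := Finset.univ.filter (fun i : Fin k => i < j ∧ 2*n+1 < a i + a j) with hC
  have hcC : cCt n a j = C.card := by rw [cCt, hC]
  have hdisj : Disjoint U C := by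
    rw [Finset.disjoint_left]; intro x hx hx'
    simp only [hU, hC, Finset.mem_filter, Finset.mem_univ, true_and] at hx hx'
    omega
  have hunion : U ∪ C = Finset.Iio j := by
    ext i
    simp only [hU, hC, Finset.mem_union, Finset.mem_filter, Finset.mem_univ, true_and,
      Finset.mem_Iio]
    constructor
    · rintro (⟨h, _⟩ | ⟨h, _⟩) <;> exact h
    · intro h
      have := hpair i j
      by_cases hc : a i + a j ≤ 2*n
      · exact Or.inl ⟨h, hc⟩
      · exact Or.inr ⟨h, by omega⟩
  have hUC : U.card + C.card = (j:ℕ) := by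
    rw [← Finset.card_union_of_disjoint hdisj, hunion, Fin.card_Iio]
  have hVeq : V = Finset.Ioi j := by
    ext i; simp [hV, Finset.mem_Ioi]
  have hVcard : V.card = k - 1 - (j:ℕ) := by rw [hVeq, Fin.card_Ioi]
  have hdisjUV : Disjoint U V := by
    rw [Finset.disjoint_left]; intro x hx hx'
    simp only [hU, hV, Finset.mem_filter, Finset.mem_univ, true_and] at hx hx'
    exact absurd (hx.1.trans hx') (lt_irrefl x)
  have hmaps : ∀ x ∈ U ∪ V, (if x < j then a x else 2*n+1 - a x) ∈ Finset.Icc 1 (2*n - a j) := by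
    intro x hx
    rcases Finset.mem_union.mp hx with hx | hx <;>
      simp only [hU, hV, Finset.mem_filter, Finset.mem_univ, true_and] at hx
    · rw [if_pos hx.1]
      have := h1 x; have := hx.2
      simp only [Finset.mem_Icc]; omega
    · rw [if_neg (by intro h; exact absurd (h.trans hx) (lt_irrefl x))]
      have hxa : a j < a x := hmono hx
      have := h2 x; have := h1 j
      simp only [Finset.mem_Icc]; omega
  have hinj : Set.InjOn (fun x => if x < j then a x else 2*n+1 - a x) ↑(U ∪ V) := by
    intro x hx y hy hxy
    simp only [Finset.coe_union, Set.mem_union, Finset.mem_coe, hU, hV, Finset.mem_filter,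
      Finset.mem_univ, true_and] at hx hy
    have hxd : x < j ∨ j < x := by rcases hx with h | h; exact Or.inl h.1; exact Or.inr h
    have hyd : y < j ∨ j < y := by rcases hy with h | h; exact Or.inl h.1; exact Or.inr h
    clear hx hy
    have hxy' : (if x < j then a x else 2*n+1 - a x) = (if y < j then a y else 2*n+1 - a y) := hxy
    clear hxy
    rcases hxd with hx1 | hx1 <;> rcases hyd with hy1 | hy1
    · rw [if_pos hx1, if_pos hy1] at hxy'; exact hmono.injective hxy'
    · rw [if_pos hx1, if_neg (by exact fun h => absurd (h.trans hy1) (lt_irrefl y))] at hxy'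
      have := h2 y; have := hpair x y; omega
    · rw [if_neg (by exact fun h => absurd (h.trans hx1) (lt_irrefl x)), if_pos hy1] at hxy'
      have := h2 x; have := hpair x y; omega
    · rw [if_neg (by exact fun h => absurd (h.trans hx1) (lt_irrefl x)),
        if_neg (by exact fun h => absurd (h.trans hy1) (lt_irrefl y))] at hxy'
      have := h2 x; have := h2 y
      exact hmono.injective (by omega)
  have hcard := Finset.card_le_card_of_injOn _ hmaps hinj
  rw [Finset.card_union_of_disjoint hdisjUV, Nat.card_Icc] at hcard
  have hj := j.isLt
  have := h1 j; have := h2 j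
  omega

lemma lemB2 (hmono : StrictMono a) (h1 : ∀ j, 1 ≤ a j) (h2 : ∀ j, a j ≤ 2*n) (j : Fin k) :
    cCt n a j < a j := by
  classical
  have hsub : ∀ x ∈ Finset.univ.filter (fun i : Fin k => i < j ∧ 2*n+1 < a i + a j),
      a x ∈ Finset.Icc (2*n+2 - a j) (a j - 1) := by
    intro x hx
    simp only [Finset.mem_filter, Finset.mem_univ, true_and] at hx
    have := hmono hx.1
    simp only [Finset.mem_Icc]; omega
  have hcard := Finset.card_le_card_of_injOn _ hsub (hmono.injective.injOn)
  rw [Nat.card_Icc] at hcard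
  rw [cCt]
  have := h1 j; have := h2 j
  omega

lemma lemB2'' (hmono : StrictMono a) (j : Fin k) (hj : a j ≤ n) : cCt n a j = 0 := by
  classical
  rw [cCt, Finset.card_eq_zero, Finset.filter_eq_empty_iff]
  intro i _
  rintro ⟨hij, hsum⟩
  have := hmono hij
  omega

lemma lemB2' (hmono : StrictMono a) (h2 : ∀ j, a j ≤ 2*n)
    (hpair : ∀ i j, a i + a j ≠ 2*n+1) (j : Fin k) (hj : n < a j) :
    cCt n a j + n + 1 ≤ a j := by
  classical
  set C := Finset.univ.filter (fun i : Fin k => i < j ∧ 2*n+1 < a i + a j) with hC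
  have hcC : cCt n a j = C.card := by rw [cCt, hC]
  have hCmem : ∀ x ∈ C, x < j ∧ 2*n+1 < a x + a j := by
    intro x hx; simpa only [hC, Finset.mem_filter, Finset.mem_univ, true_and] using hx
  set Ya := C.image a with hYa
  set Xm := C.image (fun i => 2*n+1 - a i) with hXm
  have hYacard : Ya.card = C.card := Finset.card_image_of_injOn (hmono.injective.injOn)
  have hXmcard : Xm.card = C.card := by
    apply Finset.card_image_of_injOn
    intro x _ y _ hxy
    simp only at hxy
    have := h2 x; have := h2 y
    exact hmono.injective (by omega)
  have hYasub : Ya ⊆ Finset.Icc (2*n+2 - a j) (a j - 1) := by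
    intro v hv
    simp only [hYa, Finset.mem_image] at hv
    obtain ⟨x, hx, rfl⟩ := hv
    obtain ⟨hxj, hs⟩ := hCmem x hx
    have := hmono hxj
    simp only [Finset.mem_Icc]; omega
  have hXmsub : Xm ⊆ Finset.Icc (2*n+2 - a j) (a j - 1) := by
    intro v hv
    simp only [hXm, Finset.mem_image] at hv
    obtain ⟨x, hx, rfl⟩ := hv
    obtain ⟨hxj, hs⟩ := hCmem x hx
    have := hmono hxj
    have := h2 x; have := h2 j
    simp only [Finset.mem_Icc]; omega
  have hdisj : Disjoint Ya Xm := by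
    rw [Finset.disjoint_left]
    intro v hv hv'
    simp only [hYa, hXm, Finset.mem_image] at hv hv'
    obtain ⟨x, hx, rfl⟩ := hv
    obtain ⟨y, hy, hyv⟩ := hv'
    have := h2 y
    have := hpair x y
    omega
  have hcard := Finset.card_le_card (Finset.union_subset hYasub hXmsub)
  rw [Finset.card_union_of_disjoint hdisj, Nat.card_Icc, hYacard, hXmcard] at hcard
  have := h2 j
  omega

end Backward
section Backward2

variable {n k : ℕ} {a : Fin k → ℕ}

lemma lemB34 (hmono : StrictMono a) (h1 : ∀ j, 1 ≤ a j) (h2 : ∀ j, a j ≤ 2*n)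
    (hpair : ∀ i j, a i + a j ≠ 2*n+1) (j j' : Fin k) (hjj' : (j':ℕ) = (j:ℕ) + 1) :
    cCt n a j' + a j ≤ cCt n a j + a j' ∧
      (a j ≤ n → cCt n a j' + a j < cCt n a j + a j') := by
  classical
  have hlt : j < j' := by rw [Fin.lt_def]; omega
  have haj : a j < a j' := hmono hlt
  set C := Finset.univ.filter (fun i : Fin k => i < j ∧ 2*n+1 < a i + a j) with hC
  set C' := Finset.univ.filter (fun i : Fin k => i < j' ∧ 2*n+1 < a i + a j') with hC'
  have hcC : cCt n a j = C.card := by rw [cCt, hC]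
  have hcC' : cCt n a j' = C'.card := by rw [cCt, hC']
  have hsub : C ⊆ C' := by
    intro x hx
    simp only [hC, hC', Finset.mem_filter, Finset.mem_univ, true_and] at hx ⊢
    exact ⟨hx.1.trans hlt, by omega⟩
  set N := C' \ C with hN
  have hNcard : N.card + C.card = C'.card := Finset.card_sdiff_add_card_eq_card hsub
  have hNmem : ∀ x ∈ N, x < j' ∧ 2*n+1 < a x + a j' ∧ ¬(x < j ∧ 2*n+1 < a x + a j) := by
    intro x hx
    rw [hN, Finset.mem_sdiff] at hx
    simp only [hC, hC', Finset.mem_filter, Finset.mem_univ, true_and] at hx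
    exact ⟨hx.1.1, hx.1.2, hx.2⟩
  by_cases hcase : a j + a j' ≤ 2*n+1
  · have hNempty : N = ∅ := by
      rw [Finset.eq_empty_iff_forall_notMem]
      intro x hx
      obtain ⟨hxj', hs, hnC⟩ := hNmem x hx
      by_cases hxj : x = j
      · subst hxj; omega
      · have hxltj : x < j := by
          rw [Fin.lt_def] at hxj' ⊢
          have : (x:ℕ) ≠ (j:ℕ) := fun h => hxj (Fin.ext h)
          omega
        have hax : a x < a j := hmono hxltj
        omega
    rw [hNempty] at hNcard
    simp only [Finset.card_empty] at hNcard
    omega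
  · -- bound N.card via injections
    set φ := fun x : Fin k => if x = j then 2*n+1 - a j else a x with hφ
    have hφinj : Set.InjOn φ ↑N := by
      intro x hx y hy hxy
      have hx' := hNmem x hx; have hy' := hNmem y hy
      simp only [hφ] at hxy
      by_cases hxj : x = j <;> by_cases hyj : y = j
      · rw [hxj, hyj]
      · rw [if_pos hxj, if_neg hyj] at hxy
        have hylt : y < j := by
          rw [Fin.lt_def]
          have h1' := hy'.1; rw [Fin.lt_def] at h1'
          have : (y:ℕ) ≠ (j:ℕ) := fun h => hyj (Fin.ext h)
          omega
        have := hmono hylt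
        have := h2 j; have := hpair y j
        omega
      · rw [if_neg hxj, if_pos hyj] at hxy
        have hxlt : x < j := by
          rw [Fin.lt_def]
          have h1' := hx'.1; rw [Fin.lt_def] at h1'
          have : (x:ℕ) ≠ (j:ℕ) := fun h => hxj (Fin.ext h)
          omega
        have := hmono hxlt
        have := h2 j; have := hpair x j
        omega
      · rw [if_neg hxj, if_neg hyj] at hxy
        exact hmono.injective hxy
    have hNelem : ∀ x ∈ N, x ≠ j →
        x < j ∧ 2*n+2 - a j' ≤ a x ∧ a x + a j ≤ 2*n := by
      intro x hx hxj
      obtain ⟨hxj', hs, hnC⟩ := hNmem x hx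
      have hxltj : x < j := by
        rw [Fin.lt_def] at hxj' ⊢
        have : (x:ℕ) ≠ (j:ℕ) := fun h => hxj (Fin.ext h)
        omega
      have := hmono hxltj
      have := hpair x j
      have := h2 j'
      exact ⟨hxltj, by omega, by omega⟩
    have hbound1 : N.card ≤ ((2*n - a j) + 1 - (2*n+2 - a j')) + 1 := by
      have hmaps : ∀ x ∈ N, φ x ∈ insert (2*n+1 - a j) (Finset.Icc (2*n+2 - a j') (2*n - a j)) := by
        intro x hx
        by_cases hxj : x = j
        · simp [hφ, hxj]
        · obtain ⟨hxlt, hlo, hhi⟩ := hNelem x hx hxj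
          simp only [hφ, if_neg hxj, Finset.mem_insert, Finset.mem_Icc]
          have := h1 j
          right; omega
      have := (Finset.card_le_card_of_injOn φ hmaps hφinj).trans
        (Finset.card_insert_le _ _)
      rwa [Nat.card_Icc] at this
    have hbound2 : N.card ≤ ((a j - 1) + 1 - (2*n+2 - a j')) + 1 := by
      have hmaps : ∀ x ∈ N, φ x ∈ insert (2*n+1 - a j) (Finset.Icc (2*n+2 - a j') (a j - 1)) := by
        intro x hx
        by_cases hxj : x = j
        · simp [hφ, hxj]
        · obtain ⟨hxlt, hlo, hhi⟩ := hNelem x hx hxj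
          have := hmono hxlt
          simp only [hφ, if_neg hxj, Finset.mem_insert, Finset.mem_Icc]
          right; omega
      have := (Finset.card_le_card_of_injOn φ hmaps hφinj).trans
        (Finset.card_insert_le _ _)
      rwa [Nat.card_Icc] at this
    have := h1 j; have := h2 j; have := h2 j'
    constructor
    · omega
    · intro hjn; omega

lemma lemB5a (hmono : StrictMono a) (h1 : ∀ j, 1 ≤ a j) (h2 : ∀ j, a j ≤ 2*n)
    (hpair : ∀ i j, a i + a j ≠ 2*n+1) (i j : Fin k) (hij : i < j)
    (hsum : 2*n+1 < a i + a j) :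
    cCt n a i + cCt n a j + (2*n+2) ≤ a i + a j + ((j:ℕ) - (i:ℕ)) := by
  classical
  have haij : a i < a j := hmono hij
  set X := Finset.univ.filter (fun x : Fin k => x < i ∧ 2*n+1 < a x + a i) with hX
  set Y := Finset.univ.filter (fun x : Fin k => x < i ∧ 2*n+1 < a x + a j) with hY
  have hcCi : cCt n a i = X.card := by rw [cCt, hX]
  have hCj : cCt n a j ≤ Y.card + ((j:ℕ) - (i:ℕ)) := by
    have hsub : Finset.univ.filter (fun x : Fin k => x < j ∧ 2*n+1 < a x + a j)
        ⊆ Y ∪ Finset.Ico i j := by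
      intro x hx
      simp only [Finset.mem_filter, Finset.mem_univ, true_and] at hx
      rcases lt_or_ge x i with h | h
      · apply Finset.mem_union_left
        simp only [hY, Finset.mem_filter, Finset.mem_univ, true_and]
        exact ⟨h, hx.2⟩
      · exact Finset.mem_union_right _ (Finset.mem_Ico.mpr ⟨h, hx.1⟩)
    calc cCt n a j ≤ (Y ∪ Finset.Ico i j).card := by rw [cCt]; exact Finset.card_le_card hsub
    _ ≤ Y.card + (Finset.Ico i j).card := Finset.card_union_le _ _
    _ = Y.card + ((j:ℕ) - (i:ℕ)) := by rw [Fin.card_Ico]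
  set Ya := Y.image a with hYa
  set Xm := X.image (fun x => 2*n+1 - a x) with hXm
  have hYacard : Ya.card = Y.card := Finset.card_image_of_injOn (hmono.injective.injOn)
  have hXmcard : Xm.card = X.card := by
    apply Finset.card_image_of_injOn
    intro x _ y _ hxy
    simp only at hxy
    have := h2 x; have := h2 y
    exact hmono.injective (by omega)
  have hIcc : ∀ v ∈ Ya ∪ Xm, v ∈ Finset.Icc (2*n+2 - a j) (a i - 1) := by
    intro v hv
    rcases Finset.mem_union.mp hv with hv | hv
    · simp only [hYa, Finset.mem_image] at hv
      obtain ⟨x, hx, rfl⟩ := hv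
      simp only [hY, Finset.mem_filter, Finset.mem_univ, true_and] at hx
      have := hmono hx.1
      simp only [Finset.mem_Icc]; omega
    · simp only [hXm, Finset.mem_image] at hv
      obtain ⟨x, hx, rfl⟩ := hv
      simp only [hX, Finset.mem_filter, Finset.mem_univ, true_and] at hx
      have := hmono hx.1
      have := h2 x; have := h2 i
      simp only [Finset.mem_Icc]; omega
  have hdisj : Disjoint Ya Xm := by
    rw [Finset.disjoint_left]
    intro v hv hv'
    simp only [hYa, hXm, Finset.mem_image] at hv hv'
    obtain ⟨x, _, rfl⟩ := hv
    obtain ⟨y, _, hyv⟩ := hv'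
    have := h2 y
    have := hpair x y
    omega
  have hcard := Finset.card_le_card (fun v hv => hIcc v hv)
  rw [Finset.card_union_of_disjoint hdisj, Nat.card_Icc, hYacard, hXmcard] at hcard
  have := h1 i
  have hval : (i:ℕ) < (j:ℕ) := hij
  omega

lemma lemB5b (hmono : StrictMono a) (h2 : ∀ j, a j ≤ 2*n)
    (hpair : ∀ i j, a i + a j ≠ 2*n+1) (i j : Fin k) (hij : i < j)
    (hsum : ¬ (2*n+1 < a i + a j)) :
    a i + a j + ((j:ℕ) - (i:ℕ)) ≤ cCt n a j + 2*n+1 := by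
  classical
  have hle : a i + a j ≤ 2*n := by have := hpair i j; omega
  set V := Finset.univ.filter (fun x : Fin k => i < x ∧ x < j ∧ a x + a j ≤ 2*n) with hV
  set W := Finset.univ.filter (fun x : Fin k => i < x ∧ x < j ∧ 2*n+1 < a x + a j) with hW
  have hIoo : Finset.Ioo i j ⊆ V ∪ W := by
    intro x hx
    rw [Finset.mem_Ioo] at hx
    have := hpair x j
    by_cases hc : a x + a j ≤ 2*n
    · apply Finset.mem_union_left
      simp only [hV, Finset.mem_filter, Finset.mem_univ, true_and]
      exact ⟨hx.1, hx.2, hc⟩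
    · apply Finset.mem_union_right
      simp only [hW, Finset.mem_filter, Finset.mem_univ, true_and]
      exact ⟨hx.1, hx.2, by omega⟩
  have hIooCard : (j:ℕ) - (i:ℕ) - 1 ≤ V.card + W.card := by
    have h1' := Finset.card_le_card hIoo
    have h2' := Finset.card_union_le V W
    rw [Fin.card_Ioo] at h1'
    omega
  have hWC : W.card ≤ cCt n a j := by
    rw [cCt]
    apply Finset.card_le_card
    intro x hx
    simp only [hW, Finset.mem_filter, Finset.mem_univ, true_and] at hx ⊢
    exact ⟨hx.2.1, hx.2.2⟩
  have hVcard : V.card ≤ (2*n - a j) + 1 - (a i + 1) := by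
    have hmaps : ∀ x ∈ V, a x ∈ Finset.Icc (a i + 1) (2*n - a j) := by
      intro x hx
      simp only [hV, Finset.mem_filter, Finset.mem_univ, true_and] at hx
      have := hmono hx.1
      simp only [Finset.mem_Icc]; omega
    have := Finset.card_le_card_of_injOn a hmaps (hmono.injective.injOn)
    rwa [Nat.card_Icc] at this
  have hval : (i:ℕ) < (j:ℕ) := hij
  omega

end Backward2
section Forward

variable {n k : ℕ} {lam : Fin k → ℕ}

/-- The integer values of the permutation built from a partition. -/
def aZt (n : ℕ) {k : ℕ} (lam : Fin k → ℕ) (j : Fin k) : ℤ :=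
  2*(n:ℤ)+1-k - lam j + dCt n lam j

lemma lemF0 (hdec : ∀ i j : Fin k, i ≤ j → lam j ≤ lam i)
    (hstrict : ∀ (j : Fin k) (h : (j : ℕ) + 1 < k), n - k < lam j → lam ⟨(j : ℕ) + 1, h⟩ < lam j)
    (i j : Fin k) (hij : i ≤ j) (hj : n - k < lam j) :
    lam j + ((j:ℕ) - (i:ℕ)) ≤ lam i := by
  have key : ∀ t : ℕ, ∀ j : Fin k, (j:ℕ) = (i:ℕ) + t → n - k < lam j → lam j + t ≤ lam i := by
    intro t
    induction t with
    | zero =>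
      intro j hj _
      have : i = j := Fin.ext (by omega)
      subst this; omega
    | succ t ih =>
      intro j hj hlam
      have hjk := j.isLt
      have hj0 : (i:ℕ) + t < k := by omega
      set j0 : Fin k := ⟨(i:ℕ) + t, hj0⟩ with hj0def
      have hval0 : (j0:ℕ) = (i:ℕ) + t := rfl
      have hle : lam j ≤ lam j0 := hdec j0 j (by rw [Fin.le_def]; omega)
      have hlt2 : (j0:ℕ) + 1 < k := by omega
      have hstep := hstrict j0 hlt2 (by omega)
      have hjeq : (⟨(j0:ℕ) + 1, hlt2⟩ : Fin k) = j := Fin.ext (by simp only [hval0]; omega)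
      rw [hjeq] at hstep
      have := ih j0 rfl (by omega)
      omega
  have hival : (i:ℕ) ≤ (j:ℕ) := hij
  have := key ((j:ℕ) - (i:ℕ)) j (by omega) hj
  omega

lemma lemF1 (hdec : ∀ i j : Fin k, i ≤ j → lam j ≤ lam i)
    (hstrict : ∀ (j : Fin k) (h : (j : ℕ) + 1 < k), n - k < lam j → lam ⟨(j : ℕ) + 1, h⟩ < lam j)
    (j : Fin k) (hj : n - k < lam j) : dCt n lam j = 0 := by
  classical
  rw [dCt, Finset.card_eq_zero, Finset.filter_eq_empty_iff]
  intro i _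
  rintro ⟨hij, hsum⟩
  have := lemF0 hdec hstrict i j (le_of_lt hij) hj
  have hval : (i:ℕ) < (j:ℕ) := hij
  omega

lemma lemF2 (hdec : ∀ i j : Fin k, i ≤ j → lam j ≤ lam i)
    (hstrict : ∀ (j : Fin k) (h : (j : ℕ) + 1 < k), n - k < lam j → lam ⟨(j : ℕ) + 1, h⟩ < lam j)
    (i j : Fin k) (hij : i < j) (hsum : lam i + lam j ≤ 2*(n-k) + (j:ℕ) - (i:ℕ)) :
    (j:ℕ) - (i:ℕ) ≤ dCt n lam j := by
  classical
  rw [dCt]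
  have hsub : Finset.Ico i j ⊆
      Finset.univ.filter (fun x : Fin k => x < j ∧ lam x + lam j ≤ 2*(n-k) + (j:ℕ) - (x:ℕ)) := by
    intro x hx
    rw [Finset.mem_Ico] at hx
    simp only [Finset.mem_filter, Finset.mem_univ, true_and]
    refine ⟨hx.2, ?_⟩
    have hxval : (i:ℕ) ≤ (x:ℕ) := hx.1
    have hxj : (x:ℕ) < (j:ℕ) := hx.2
    have hival : (i:ℕ) < (j:ℕ) := hij
    by_cases hc : n - k < lam x
    · have := lemF0 hdec hstrict i x hx.1 hc
      omega
    · have := hdec x j (le_of_lt hx.2)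
      omega
  have := Finset.card_le_card hsub
  rw [Fin.card_Ico] at this
  exact this

lemma lemF3 (hdec : ∀ i j : Fin k, i ≤ j → lam j ≤ lam i)
    (hstrict : ∀ (j : Fin k) (h : (j : ℕ) + 1 < k), n - k < lam j → lam ⟨(j : ℕ) + 1, h⟩ < lam j)
    (i j : Fin k) (hij : i < j) (hsum : ¬ (lam i + lam j ≤ 2*(n-k) + (j:ℕ) - (i:ℕ))) :
    dCt n lam j + 1 ≤ (j:ℕ) - (i:ℕ) ∧ dCt n lam i = 0 := by
  classical
  have hival : (i:ℕ) < (j:ℕ) := hij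
  have hlami : n - k < lam i := by
    have := hdec i j (le_of_lt hij)
    omega
  constructor
  · rw [dCt]
    have hsub : Finset.univ.filter
        (fun x : Fin k => x < j ∧ lam x + lam j ≤ 2*(n-k) + (j:ℕ) - (x:ℕ)) ⊆ Finset.Ioo i j := by
      intro x hx
      simp only [Finset.mem_filter, Finset.mem_univ, true_and] at hx
      rw [Finset.mem_Ioo]
      refine ⟨?_, hx.1⟩
      by_contra hxi
      push_neg at hxi
      have hxval : (x:ℕ) ≤ (i:ℕ) := hxi
      have := lemF0 hdec hstrict x i hxi hlami
      have hxj : (x:ℕ) < (j:ℕ) := hx.1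
      omega
    have := Finset.card_le_card hsub
    rw [Fin.card_Ioo] at this
    omega
  · exact lemF1 hdec hstrict i hlami

lemma lemF4 (hk : k ≤ n) (hdec : ∀ i j : Fin k, i ≤ j → lam j ≤ lam i)
    (hstrict : ∀ (j : Fin k) (h : (j : ℕ) + 1 < k), n - k < lam j → lam ⟨(j : ℕ) + 1, h⟩ < lam j)
    (i j : Fin k) (hij : i < j) :
    (lam i + lam j ≤ 2*(n-k) + (j:ℕ) - (i:ℕ) → 2*(n:ℤ)+2 ≤ aZt n lam i + aZt n lam j) ∧
    (¬ (lam i + lam j ≤ 2*(n-k) + (j:ℕ) - (i:ℕ)) → aZt n lam i + aZt n lam j ≤ 2*n) := by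
  have hival : (i:ℕ) < (j:ℕ) := hij
  have hjk := j.isLt
  constructor
  · intro hsum
    have hd := lemF2 hdec hstrict i j hij hsum
    rw [aZt, aZt]
    omega
  · intro hsum
    obtain ⟨hd, hdi⟩ := lemF3 hdec hstrict i j hij hsum
    rw [aZt, aZt, hdi]
    omega

lemma lemF5 (hdec : ∀ i j : Fin k, i ≤ j → lam j ≤ lam i)
    (hstrict : ∀ (j : Fin k) (h : (j : ℕ) + 1 < k), n - k < lam j → lam ⟨(j : ℕ) + 1, h⟩ < lam j)
    (hk : k ≤ n)
    (j j' : Fin k) (hjj' : (j':ℕ) = (j:ℕ) + 1) :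
    aZt n lam j < aZt n lam j' := by
  classical
  have hlt : j < j' := by rw [Fin.lt_def]; omega
  set D := Finset.univ.filter
    (fun x : Fin k => x < j ∧ lam x + lam j ≤ 2*(n-k) + (j:ℕ) - (x:ℕ)) with hD
  set D' := Finset.univ.filter
    (fun x : Fin k => x < j' ∧ lam x + lam j' ≤ 2*(n-k) + (j':ℕ) - (x:ℕ)) with hD'
  have hdD : dCt n lam j = D.card := by rw [dCt, hD]
  have hdD' : dCt n lam j' = D'.card := by rw [dCt, hD']
  have hlamle : lam j' ≤ lam j := hdec j j' (le_of_lt hlt)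
  have hsub : D ⊆ D' := by
    intro x hx
    simp only [hD, hD', Finset.mem_filter, Finset.mem_univ, true_and] at hx ⊢
    have hxv : (x:ℕ) < (j:ℕ) := hx.1
    exact ⟨hx.1.trans hlt, by omega⟩
  by_cases heq : lam j' = lam j
  · -- j itself is a new element of D'
    have hlamjle : lam j ≤ n - k := by
      by_contra hc
      push_neg at hc
      have := hstrict j (by omega) hc
      have : lam ⟨(j:ℕ)+1, by omega⟩ = lam j' := by congr 1; exact Fin.ext (by simp; omega)
      omega
    have hjmem : j ∈ D' := by
      simp only [hD', Finset.mem_filter, Finset.mem_univ, true_and]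
      exact ⟨hlt, by omega⟩
    have hjnot : j ∉ D := by
      simp only [hD, Finset.mem_filter, Finset.mem_univ, true_and]
      rintro ⟨h, -⟩
      exact absurd h (lt_irrefl j)
    have : D.card + 1 ≤ D'.card := by
      have hsub2 : insert j D ⊆ D' := Finset.insert_subset hjmem hsub
      have := Finset.card_le_card hsub2
      rwa [Finset.card_insert_of_notMem hjnot] at this
    rw [aZt, aZt]
    omega
  · have hstrict' : lam j' < lam j := by
      have := hlamle
      omega
    have := Finset.card_le_card hsub
    rw [aZt, aZt]
    omega

lemma lemF6 (hk : k ≤ n) (hbound : ∀ i : Fin k, lam i ≤ 2*n - k) (j : Fin k) :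
    1 ≤ aZt n lam j ∧ aZt n lam j ≤ 2*n := by
  classical
  have hjk := j.isLt
  have hd : dCt n lam j ≤ (j:ℕ) := by
    rw [dCt]
    have hsub : Finset.univ.filter
        (fun x : Fin k => x < j ∧ lam x + lam j ≤ 2*(n-k) + (j:ℕ) - (x:ℕ)) ⊆ Finset.Iio j := by
      intro x hx
      simp only [Finset.mem_filter, Finset.mem_univ, true_and] at hx
      exact Finset.mem_Iio.mpr hx.1
    have := Finset.card_le_card hsub
    rwa [Fin.card_Iio] at this
  have := hbound j
  rw [aZt]
  omega

end Forward

section Build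

lemma buildPerm {n k : ℕ} (hk : k ≤ n) (aN : Fin k → ℕ) (h1 : ∀ j, 1 ≤ aN j)
    (h2 : ∀ j, aN j ≤ 2*n) (hmono : StrictMono aN) (hpair : ∀ i j, aN i + aN j ≠ 2*n+1) :
    ∃ u : Perm (Fin (2*n)), u ∈ WPSet n k ∧
      ∀ (p : Fin (2*n)) (j : Fin k), (p:ℕ) = (j:ℕ) → ((u p : ℕ) + 1 = aN j) := by
  classical
  have hrev : ∀ v : Fin (2*n), (v.rev : ℕ) = 2*n - 1 - (v:ℕ) := by
    intro v; rw [Fin.val_rev]; omega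
  set aF : Fin k → Fin (2*n) := fun j => ⟨aN j - 1, by have := h1 j; have := h2 j; omega⟩
    with haF
  have haFval : ∀ j, (aF j : ℕ) = aN j - 1 := fun j => rfl
  have haFinj : Function.Injective aF := by
    intro x y hxy
    have hval : aN x - 1 = aN y - 1 := congrArg Fin.val hxy
    have := h1 x; have := h1 y
    exact hmono.injective (by omega)
  set A := Finset.image aF Finset.univ with hA
  have hmemA : ∀ v, v ∈ A ↔ ∃ j, aF j = v := by
    intro v; simp [hA]
  -- rev of an A element is not in A
  have hrevA : ∀ v, v ∈ A → v.rev ∉ A := by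
    intro v hv hv'
    obtain ⟨x, hx⟩ := (hmemA v).mp hv
    obtain ⟨y, hy⟩ := (hmemA v.rev).mp hv'
    have hx' : aN x - 1 = (v:ℕ) := by rw [← hx]
    have hy' : aN y - 1 = (v.rev:ℕ) := by rw [← hy]
    rw [hrev] at hy'
    have := h1 x; have := h2 x; have := h1 y; have := h2 y
    have := hpair x y
    have := v.isLt
    omega
  set g : Fin k → Fin (2*n) := fun j => if aN j ≤ n then aF j else (aF j).rev with hg
  have hginj : Function.Injective g := by
    intro x y hxy
    simp only [hg] at hxy
    by_cases hx : aN x ≤ n <;> by_cases hy : aN y ≤ n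
    · rw [if_pos hx, if_pos hy] at hxy; exact haFinj hxy
    · rw [if_pos hx, if_neg hy] at hxy
      have h1' : aN x - 1 = ((aF y).rev : ℕ) := by rw [← hxy]
      rw [hrev] at h1'
      have h2' : (aF y : ℕ) = aN y - 1 := rfl
      have := h1 x; have := h1 y; have := h2 x; have := h2 y
      have := hpair x y
      omega
    · rw [if_neg hx, if_pos hy] at hxy
      have h1' : aN y - 1 = ((aF x).rev : ℕ) := by rw [hxy]
      rw [hrev] at h1'
      have h2' : (aF x : ℕ) = aN x - 1 := rfl
      have := h1 x; have := h1 y; have := h2 x; have := h2 y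
      have := hpair x y
      omega
    · rw [if_neg hx, if_neg hy] at hxy
      exact haFinj (Fin.rev_injective hxy)
  have hgval : ∀ j, (g j : ℕ) < n := by
    intro j
    simp only [hg]
    by_cases hj : aN j ≤ n
    · rw [if_pos hj]
      have := h1 j
      have : (aF j : ℕ) = aN j - 1 := rfl
      omega
    · rw [if_neg hj]
      have := h2 j
      have h2' : (aF j : ℕ) = aN j - 1 := rfl
      rw [hrev]
      have := h1 j
      omega
  set Ln := Finset.univ.filter (fun v : Fin (2*n) => (v:ℕ) < n) with hLn
  have hLncard : Ln.card = n := by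
    have heq : Ln = Finset.image (Fin.castLE (by omega : n ≤ 2*n)) Finset.univ := by
      ext v
      simp only [hLn, Finset.mem_filter, Finset.mem_univ, true_and, Finset.mem_image]
      constructor
      · intro hv; exact ⟨⟨(v:ℕ), hv⟩, Fin.ext rfl⟩
      · rintro ⟨w, rfl⟩; exact w.isLt
    rw [heq, Finset.card_image_of_injective _ (Fin.castLE_injective _), Finset.card_univ,
      Fintype.card_fin]
  set G := Finset.image g Finset.univ with hG
  have hGcard : G.card = k := by
    rw [hG, Finset.card_image_of_injective _ hginj, Finset.card_univ, Fintype.card_fin]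
  have hGsub : G ⊆ Ln := by
    intro v hv
    simp only [hG, Finset.mem_image, Finset.mem_univ, true_and] at hv
    obtain ⟨j, rfl⟩ := hv
    simp only [hLn, Finset.mem_filter, Finset.mem_univ, true_and]
    exact hgval j
  set B := Ln \ G with hB
  have hBcard : B.card = n - k := by rw [hB, Finset.card_sdiff_of_subset hGsub, hLncard, hGcard]
  have hB_iff : ∀ v, v ∈ B ↔ ((v:ℕ) < n ∧ v ∉ A ∧ v.rev ∉ A) := by
    intro v
    rw [hB, Finset.mem_sdiff]
    simp only [hLn, hG, Finset.mem_filter, Finset.mem_univ, true_and, Finset.mem_image]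
    constructor
    · rintro ⟨hvn, hvg⟩
      refine ⟨hvn, ?_, ?_⟩
      · intro hvA
        obtain ⟨j, hj⟩ := (hmemA v).mp hvA
        apply hvg
        refine ⟨j, ?_⟩
        have hval : (aF j : ℕ) = aN j - 1 := rfl
        have : aN j ≤ n := by
          have : (aF j : ℕ) = (v:ℕ) := by rw [hj]
          have := h1 j
          omega
        simp only [hg, if_pos this, hj]
      · intro hvA
        obtain ⟨j, hj⟩ := (hmemA v.rev).mp hvA
        apply hvg
        refine ⟨j, ?_⟩
        have hval : (aF j : ℕ) = aN j - 1 := rfl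
        have hvrev : (v.rev : ℕ) = 2*n-1-(v:ℕ) := hrev v
        have hn : ¬ (aN j ≤ n) := by
          have : (aF j : ℕ) = (v.rev:ℕ) := by rw [hj]
          have := h1 j
          omega
        simp only [hg, if_neg hn, hj, Fin.rev_rev]
    · rintro ⟨hvn, hvA, hvA'⟩
      refine ⟨hvn, ?_⟩
      rintro ⟨j, hj⟩
      simp only [hg] at hj
      by_cases hcase : aN j ≤ n
      · rw [if_pos hcase] at hj
        exact hvA ((hmemA v).mpr ⟨j, hj⟩)
      · rw [if_neg hcase] at hj
        apply hvA'
        apply (hmemA v.rev).mpr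
        refine ⟨j, ?_⟩
        rw [← hj, Fin.rev_rev]
  have hABdisj : ∀ v, v ∈ B → v ∉ A := fun v hv => ((hB_iff v).mp hv).2.1
  set bE := B.orderEmbOfFin hBcard with hbE
  set fA : Fin (2*n) → Fin (2*n) := fun p =>
    if hpk : (p:ℕ) < k then aF ⟨(p:ℕ), hpk⟩
    else if hpn : (p:ℕ) < n then bE ⟨(p:ℕ)-k, by omega⟩ else p with hfA
  have hfA_mem : ∀ p : Fin (2*n), (p:ℕ) < n → fA p ∈ A ∪ B := by
    intro p hp
    simp only [hfA]
    by_cases hpk : (p:ℕ) < k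
    · rw [dif_pos hpk]
      exact Finset.mem_union_left _ ((hmemA _).mpr ⟨_, rfl⟩)
    · rw [dif_neg hpk, dif_pos hp]
      exact Finset.mem_union_right _ (Finset.orderEmbOfFin_mem _ _ _)
  have hrevAB : ∀ v, v ∈ A ∪ B → v.rev ∉ A ∪ B := by
    intro v hv hv'
    rcases Finset.mem_union.mp hv with hva | hvb <;> rcases Finset.mem_union.mp hv' with hva' | hvb'
    · exact hrevA v hva hva'
    · exact ((hB_iff v.rev).mp hvb').2.2 (by rwa [Fin.rev_rev])
    · exact ((hB_iff v).mp hvb).2.2 hva'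
    · have hv1 : (v:ℕ) < n := ((hB_iff v).mp hvb).1
      have hv2 : (v.rev:ℕ) < n := ((hB_iff v.rev).mp hvb').1
      rw [hrev] at hv2
      have := v.isLt
      omega
  have hfA_inj : ∀ p q : Fin (2*n), (p:ℕ) < n → (q:ℕ) < n → fA p = fA q → p = q := by
    intro p q hp hq hpq
    simp only [hfA] at hpq
    by_cases hpk : (p:ℕ) < k <;> by_cases hqk : (q:ℕ) < k
    · rw [dif_pos hpk, dif_pos hqk] at hpq
      have := haFinj hpq
      have hval : (p:ℕ) = (q:ℕ) := congrArg (fun x : Fin k => (x : ℕ)) this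
      exact Fin.ext hval
    · rw [dif_pos hpk, dif_neg hqk, dif_pos hq] at hpq
      have hBmem : bE ⟨(q:ℕ)-k, by omega⟩ ∈ B := Finset.orderEmbOfFin_mem _ _ _
      exact absurd ((hmemA _).mpr ⟨_, hpq⟩) (hABdisj _ hBmem)
    · rw [dif_neg hpk, dif_pos hp, dif_pos hqk] at hpq
      have hBmem : bE ⟨(p:ℕ)-k, by omega⟩ ∈ B := Finset.orderEmbOfFin_mem _ _ _
      exact absurd ((hmemA _).mpr ⟨_, hpq.symm⟩) (hABdisj _ hBmem)
    · rw [dif_neg hpk, dif_pos hp, dif_neg hqk, dif_pos hq] at hpq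
      have := bE.injective hpq
      have hval : (p:ℕ) - k = (q:ℕ) - k := congrArg Fin.val this
      exact Fin.ext (by omega)
  set f : Fin (2*n) → Fin (2*n) := fun p =>
    if (p:ℕ) < n then fA p else (fA p.rev).rev with hf
  have hrevlt : ∀ p : Fin (2*n), ¬ ((p:ℕ) < n) → ((p.rev:ℕ) < n) := by
    intro p hp
    rw [hrev]
    have := p.isLt
    omega
  have hrevge : ∀ p : Fin (2*n), (p:ℕ) < n → ¬ ((p.rev:ℕ) < n) := by
    intro p hp
    rw [hrev]
    have := p.isLt
    omega
  have hfinj : Function.Injective f := by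
    intro p q hpq
    simp only [hf] at hpq
    by_cases hp : (p:ℕ) < n <;> by_cases hq : (q:ℕ) < n
    · rw [if_pos hp, if_pos hq] at hpq
      exact hfA_inj p q hp hq hpq
    · rw [if_pos hp, if_neg hq] at hpq
      have h1' : fA p ∈ A ∪ B := hfA_mem p hp
      have h2' : fA q.rev ∈ A ∪ B := hfA_mem _ (hrevlt q hq)
      have := hrevAB _ h2'
      rw [← hpq] at this
      exact absurd h1' this
    · rw [if_neg hp, if_pos hq] at hpq
      have h1' : fA q ∈ A ∪ B := hfA_mem q hq
      have h2' : fA p.rev ∈ A ∪ B := hfA_mem _ (hrevlt p hp)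
      have := hrevAB _ h2'
      rw [hpq] at this
      exact absurd h1' this
    · rw [if_neg hp, if_neg hq] at hpq
      have := hfA_inj _ _ (hrevlt p hp) (hrevlt q hq) (Fin.rev_injective hpq)
      exact Fin.rev_injective this
  refine ⟨Equiv.ofBijective f (Finite.injective_iff_bijective.mp hfinj), ⟨?_, ?_, ?_, ?_⟩, ?_⟩
  · -- rev axiom
    intro i
    simp only [Equiv.ofBijective_apply, hf]
    by_cases hi : (i:ℕ) < n
    · rw [if_neg (hrevge i hi), if_pos hi, Fin.rev_rev]
    · rw [if_pos (hrevlt i hi), if_neg hi, Fin.rev_rev]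
  · -- increasing on first k positions
    intro i j hij hjk
    have hik : (i:ℕ) < k := lt_trans hij hjk
    have hin : (i:ℕ) < n := by omega
    have hjn : (j:ℕ) < n := by omega
    simp only [Equiv.ofBijective_apply, hf, if_pos hin, if_pos hjn, hfA, dif_pos hik,
      dif_pos hjk]
    have hlt : (⟨(i:ℕ), hik⟩ : Fin k) < ⟨(j:ℕ), hjk⟩ := hij
    have := hmono hlt
    have := h1 (⟨(i:ℕ), hik⟩ : Fin k)
    rw [Fin.lt_def]
    have hv1 : (aF ⟨(i:ℕ), hik⟩ : ℕ) = aN ⟨(i:ℕ), hik⟩ - 1 := rfl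
    have hv2 : (aF ⟨(j:ℕ), hjk⟩ : ℕ) = aN ⟨(j:ℕ), hjk⟩ - 1 := rfl
    omega
  · -- increasing on middle positions
    intro i j hki hij hjn
    have hin : (i:ℕ) < n := by have : (i:ℕ) < (j:ℕ) := hij; omega
    have hik : ¬ ((i:ℕ) < k) := by omega
    have hjk : ¬ ((j:ℕ) < k) := by have : (i:ℕ) < (j:ℕ) := hij; omega
    simp only [Equiv.ofBijective_apply, hf, if_pos hin, if_pos hjn, hfA, dif_neg hik,
      dif_neg hjk, dif_pos hin, dif_pos hjn]
    apply bE.strictMono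
    rw [Fin.lt_def]
    have : (i:ℕ) < (j:ℕ) := hij
    simp only []
    omega
  · -- middle values < n
    intro i hki hin
    simp only [Equiv.ofBijective_apply, hf, if_pos hin, hfA, dif_neg (by omega : ¬ ((i:ℕ) < k)),
      dif_pos hin]
    exact ((hB_iff _).mp (Finset.orderEmbOfFin_mem _ _ _)).1
  · -- values on the first k positions
    intro p j hpj
    have hpk : (p:ℕ) < k := by rw [hpj]; exact j.isLt
    have hpn : (p:ℕ) < n := by omega
    simp only [Equiv.ofBijective_apply, hf, if_pos hpn, hfA, dif_pos hpk]
    have hidx : (⟨(p:ℕ), hpk⟩ : Fin k) = j := Fin.ext hpj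
    rw [hidx]
    have hval : (aF j : ℕ) = aN j - 1 := rfl
    have := h1 j
    omega

end Build

section Ext

lemma rev_val {N : ℕ} (v : Fin N) : (v.rev : ℕ) = N - 1 - (v:ℕ) := by
  rw [Fin.val_rev]; omega

lemma WP_ext {n k : ℕ} (hk : k ≤ n) {u1 u2 : Perm (Fin (2*n))}
    (hu1 : u1 ∈ WPSet n k) (hu2 : u2 ∈ WPSet n k)
    (hagree : ∀ p : Fin (2*n), (p:ℕ) < k → u1 p = u2 p) : u1 = u2 := by
  classical
  obtain ⟨hr1, hi1, hm1, hv1⟩ := hu1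
  obtain ⟨hr2, hi2, hm2, hv2⟩ := hu2
  set A := (Finset.univ.filter (fun p : Fin (2*n) => (p:ℕ) < k)).image (fun p => u1 p) with hA
  have hmemA : ∀ v, v ∈ A ↔ ∃ p : Fin (2*n), (p:ℕ) < k ∧ u1 p = v := by
    intro v
    simp only [hA, Finset.mem_image, Finset.mem_filter, Finset.mem_univ, true_and]
  have hmemA2 : ∀ v, v ∈ A ↔ ∃ p : Fin (2*n), (p:ℕ) < k ∧ u2 p = v := by
    intro v
    rw [hmemA]
    constructor
    · rintro ⟨p, hp, rfl⟩; exact ⟨p, hp, (hagree p hp).symm⟩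
    · rintro ⟨p, hp, rfl⟩; exact ⟨p, hp, hagree p hp⟩
  set Bv := Finset.univ.filter (fun v : Fin (2*n) => (v:ℕ) < n ∧ v ∉ A ∧ v.rev ∉ A) with hBv
  have key : ∀ w : Perm (Fin (2*n)),
      (∀ i : Fin (2*n), w i.rev = (w i).rev) →
      (∀ i : Fin (2*n), k ≤ (i:ℕ) → (i:ℕ) < n → ((w i) : ℕ) < n) →
      (∀ v, v ∈ A ↔ ∃ p : Fin (2*n), (p:ℕ) < k ∧ w p = v) →
      (∀ p : Fin (2*n), k ≤ (p:ℕ) → (p:ℕ) < n → w p ∈ Bv) ∧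
      (∀ v ∈ Bv, ∃ p : Fin (2*n), k ≤ (p:ℕ) ∧ (p:ℕ) < n ∧ w p = v) := by
    intro w hrw hvw hAw
    constructor
    · intro p hkp hpn
      simp only [hBv, Finset.mem_filter, Finset.mem_univ, true_and]
      refine ⟨hvw p hkp hpn, ?_, ?_⟩
      · intro hin
        obtain ⟨q, hq, hq2⟩ := (hAw _).mp hin
        have : q = p := w.injective hq2
        subst this
        omega
      · intro hin
        obtain ⟨q, hq, hq2⟩ := (hAw _).mp hin
        have heq : w p.rev = (w p).rev := hrw p
        rw [← heq] at hq2
        have : q = p.rev := w.injective hq2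
        subst this
        rw [rev_val] at hq
        have := p.isLt
        omega
    · intro v hv
      simp only [hBv, Finset.mem_filter, Finset.mem_univ, true_and] at hv
      obtain ⟨hvn, hvA, hvA'⟩ := hv
      set p := w.symm v with hp
      have hwp : w p = v := w.apply_symm_apply v
      have hp1 : ¬ ((p:ℕ) < k) := fun hpk => hvA ((hAw v).mpr ⟨p, hpk, hwp⟩)
      have hp2 : (p:ℕ) < n := by
        by_contra hge
        push_neg at hge
        have hq : (p.rev : ℕ) < n := by rw [rev_val]; have := p.isLt; omega
        have hwrev : w p = (w p.rev).rev := by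
          rw [← hrw p.rev, Fin.rev_rev]
        have hvrev : v.rev = w p.rev := by
          rw [← hwp, hwrev, Fin.rev_rev]
        by_cases hqk : (p.rev:ℕ) < k
        · exact hvA' ((hAw v.rev).mpr ⟨p.rev, hqk, hvrev.symm⟩)
        · have hlt := hvw p.rev (by omega) hq
          rw [← hvrev, rev_val] at hlt
          have := v.isLt
          omega
      exact ⟨p, by omega, hp2, hwp⟩
  obtain ⟨hin1, hsur1⟩ := key u1 hr1 hv1 hmemA
  obtain ⟨hin2, hsur2⟩ := key u2 hr2 hv2 hmemA2
  set g1 : Fin (n-k) → Fin (2*n) :=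
    fun t => u1 ⟨k + (t:ℕ), by have := t.isLt; omega⟩ with hg1
  set g2 : Fin (n-k) → Fin (2*n) :=
    fun t => u2 ⟨k + (t:ℕ), by have := t.isLt; omega⟩ with hg2
  have hg1mono : StrictMono g1 := by
    intro s t hst
    simp only [hg1]
    apply hm1
    · exact Nat.le_add_right k (s:ℕ)
    · rw [Fin.lt_def]
      have : (s:ℕ) < (t:ℕ) := hst
      simpa using this
    · have := t.isLt
      simp only []
      omega
  have hg2mono : StrictMono g2 := by
    intro s t hst
    simp only [hg2]
    apply hm2
    · exact Nat.le_add_right k (s:ℕ)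
    · rw [Fin.lt_def]
      have : (s:ℕ) < (t:ℕ):= hst
      simpa using this
    · have := t.isLt
      simp only []
      omega
  have hg1mem : ∀ t, g1 t ∈ Bv := by
    intro t
    simp only [hg1]
    exact hin1 _ (Nat.le_add_right k (t:ℕ)) (by have := t.isLt; simp only []; omega)
  have hg2mem : ∀ t, g2 t ∈ Bv := by
    intro t
    simp only [hg2]
    exact hin2 _ (Nat.le_add_right k (t:ℕ)) (by have := t.isLt; simp only []; omega)
  have hBvcard : Bv.card = n - k := by
    have himg : Bv = Finset.image g1 Finset.univ := by
      ext v
      simp only [Finset.mem_image, Finset.mem_univ, true_and]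
      constructor
      · intro hv
        obtain ⟨p, hp1, hp2, hp3⟩ := hsur1 v hv
        refine ⟨⟨(p:ℕ)-k, by omega⟩, ?_⟩
        simp only [hg1]
        rw [← hp3]
        congr 1
        exact Fin.ext (by simp only []; omega)
      · rintro ⟨t, rfl⟩
        exact hg1mem t
    rw [himg, Finset.card_image_of_injective _ hg1mono.injective, Finset.card_univ,
      Fintype.card_fin]
  have he1 : g1 = ⇑(Bv.orderEmbOfFin hBvcard) :=
    Finset.orderEmbOfFin_unique hBvcard hg1mem hg1mono
  have he2 : g2 = ⇑(Bv.orderEmbOfFin hBvcard) :=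
    Finset.orderEmbOfFin_unique hBvcard hg2mem hg2mono
  have hgeq : ∀ t, g1 t = g2 t := by
    intro t
    rw [he1, he2]
  have hmid : ∀ p : Fin (2*n), (p:ℕ) < n → u1 p = u2 p := by
    intro p hpn
    by_cases hpk : (p:ℕ) < k
    · exact hagree p hpk
    · have hidx : p = ⟨k + ((p:ℕ) - k), by omega⟩ := Fin.ext (by simp only []; omega)
      have := hgeq ⟨(p:ℕ)-k, by omega⟩
      simp only [hg1, hg2] at this
      rw [hidx]
      convert this using 2
  apply Equiv.ext
  intro p
  by_cases hpn : (p:ℕ) < n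
  · exact hmid p hpn
  · have hq : (p.rev:ℕ) < n := by rw [rev_val]; have := p.isLt; omega
    have e1 : u1 p = (u1 p.rev).rev := by rw [← hr1 p.rev, Fin.rev_rev]
    have e2 : u2 p = (u2 p.rev).rev := by rw [← hr2 p.rev, Fin.rev_rev]
    rw [e1, e2, hmid _ hq]

end Ext

section Glue

lemma adj_strictMono {k : ℕ} {α : Type*} [Preorder α] {f : Fin k → α}
    (h : ∀ j j' : Fin k, (j':ℕ) = (j:ℕ)+1 → f j < f j') : StrictMono f := by
  intro i j hij
  have key : ∀ t : ℕ, ∀ j : Fin k, (j:ℕ) = (i:ℕ) + t + 1 → f i < f j := by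
    intro t
    induction t with
    | zero => intro j hj; exact h i j (by omega)
    | succ t ih =>
      intro j hj
      have hjk := j.isLt
      have hj0 : (i:ℕ)+t+1 < k := by omega
      have hmid : ((⟨(i:ℕ)+t+1, hj0⟩ : Fin k) : ℕ) = (i:ℕ)+t+1 := rfl
      exact lt_trans (ih ⟨(i:ℕ)+t+1, hj0⟩ rfl) (h _ j (by omega))
  have hval : (i:ℕ) < (j:ℕ) := hij
  exact key ((j:ℕ) - (i:ℕ) - 1) j (by omega)

lemma adj_antitone {k : ℕ} {α : Type*} [Preorder α] {f : Fin k → α}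
    (h : ∀ j j' : Fin k, (j':ℕ) = (j:ℕ)+1 → f j' ≤ f j) :
    ∀ i j : Fin k, i ≤ j → f j ≤ f i := by
  intro i j hij
  have key : ∀ t : ℕ, ∀ j : Fin k, (j:ℕ) = (i:ℕ) + t → f j ≤ f i := by
    intro t
    induction t with
    | zero =>
      intro j hj
      have : i = j := Fin.ext (by omega)
      subst this; exact le_rfl
    | succ t ih =>
      intro j hj
      have hjk := j.isLt
      have hj0 : (i:ℕ)+t < k := by omega
      have hmid : ((⟨(i:ℕ)+t, hj0⟩ : Fin k) : ℕ) = (i:ℕ)+t := rfl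
      exact le_trans (h ⟨(i:ℕ)+t, hj0⟩ j (by omega)) (ih ⟨(i:ℕ)+t, hj0⟩ rfl)
  have hval : (i:ℕ) ≤ (j:ℕ) := hij
  exact key ((j:ℕ) - (i:ℕ)) j (by omega)

lemma aN_facts {n k : ℕ} (hk : k ≤ n) (hk2 : k ≤ 2*n) {u : Perm (Fin (2*n))}
    (hu : u ∈ WPSet n k) {aN : Fin k → ℕ}
    (haN : ∀ j, aN j = (u (Fin.castLE hk2 j) : ℕ) + 1) :
    StrictMono aN ∧ (∀ j, 1 ≤ aN j) ∧ (∀ j, aN j ≤ 2*n) ∧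
      (∀ i j, aN i + aN j ≠ 2*n+1) := by
  obtain ⟨hr, hi, hm, hv⟩ := hu
  have hmono : StrictMono aN := by
    intro i j hij
    rw [haN, haN]
    have hposval : ((Fin.castLE hk2 i : Fin (2*n)) : ℕ) = (i:ℕ) := rfl
    have hposval' : ((Fin.castLE hk2 j : Fin (2*n)) : ℕ) = (j:ℕ) := rfl
    have hpos : (Fin.castLE hk2 i : Fin (2*n)) < Fin.castLE hk2 j := by
      rw [Fin.lt_def]
      exact hij
    have hlt := hi _ _ hpos (by rw [hposval']; exact j.isLt)
    have : (u (Fin.castLE hk2 i) : ℕ) < (u (Fin.castLE hk2 j) : ℕ) := hlt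
    omega
  refine ⟨hmono, fun j => by rw [haN]; omega, fun j => by rw [haN]; have := (u (Fin.castLE hk2 j)).isLt; omega, ?_⟩
  intro i j hsum
  rw [haN, haN] at hsum
  by_cases hij : i = j
  · subst hij
    omega
  · set pi := Fin.castLE hk2 i with hpi
    set pj := Fin.castLE hk2 j with hpj
    have hival : (pi : ℕ) = (i:ℕ) := rfl
    have hjval : (pj : ℕ) = (j:ℕ) := rfl
    have h2n : 0 < 2*n := by
      have := (u pi).isLt
      omega
    have hvali : (u pi).val < 2*n := (u pi).isLt
    have hvalj : (u pj).val < 2*n := (u pj).isLt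
    have heq : u pj = (u pi).rev := by
      apply Fin.ext
      rw [rev_val]
      omega
    rw [← hr pi] at heq
    have hpe : pj = pi.rev := u.injective heq
    have : (pj:ℕ) = (pi.rev : ℕ) := by rw [hpe]
    rw [rev_val] at this
    have hik := i.isLt
    have hjk := j.isLt
    omega

end Glue

/-- Buch–Kresch–Tamvakis: the formulas
`w(j) = 2n+1-k-λ_j + #{i<j : λ_i+λ_j ≤ 2(n-k)+j-i}` and
`λ_j = 2n+1-k-w(j) + #{i<j : w(i)+w(j) > 2n+1}`
define mutually inverse bijections between the set `Λ` of `(n-k)`-strict partitions and the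
set `W^P` of minimal length representatives. -/
theorem stmt_19 (n k : ℕ) (hk : k ≤ n) (hk2 : k ≤ 2 * n) :
    (∀ u ∈ WPSet n k, ∃! lam : Fin k → ℕ, lam ∈ LamSet n k ∧ lamFormula n k hk2 lam u) ∧
    (∀ lam ∈ LamSet n k, ∃! u : Perm (Fin (2 * n)), u ∈ WPSet n k ∧ wFormula n k hk2 lam u) ∧
    (∀ lam ∈ LamSet n k, ∀ u ∈ WPSet n k,
      (lamFormula n k hk2 lam u ↔ wFormula n k hk2 lam u)) := by
  refine ⟨?_, ?_, ?_⟩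
  · -- Part 1 : u ↦ λ
    intro u hu
    set aN : Fin k → ℕ := fun j => (u (Fin.castLE hk2 j) : ℕ) + 1 with haN
    obtain ⟨hmono, h1, h2, hpair⟩ := aN_facts hk hk2 hu (aN := aN) (fun j => rfl)
    set lamZ : Fin k → ℤ := fun j => 2*(n:ℤ)+1 - k - aN j + cCt n aN j with hlamZ
    have hnonneg : ∀ j, 0 ≤ lamZ j := by
      intro j
      have := lemB1 hmono h1 h2 hpair j
      have hjk := j.isLt
      have ea : aN j = (u (Fin.castLE hk2 j) : ℕ) + 1 := rfl
      simp only [hlamZ]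
      push_cast
      omega
    set lam : Fin k → ℕ := fun j => (lamZ j).toNat with hlam
    have hlamval : ∀ j, (lam j : ℤ) = lamZ j := fun j => Int.toNat_of_nonneg (hnonneg j)
    have hlamZval : ∀ j, lamZ j = 2*(n:ℤ)+1 - k - aN j + cCt n aN j := fun j => rfl
    have hnc : ∀ j : Fin k, {i : Fin k | i < j ∧
        2 * n + 1 < ((u (Fin.castLE hk2 i) : ℕ) + 1) + ((u (Fin.castLE hk2 j) : ℕ) + 1)}.ncard
        = cCt n aN j := by
      intro j
      rw [cCt]
      exact ncard_eq_filter_card _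
    have hform : lamFormula n k hk2 lam u := by
      intro j
      rw [hnc j]
      have e1 := hlamval j
      have e2 := hlamZval j
      have ea : aN j = (u (Fin.castLE hk2 j) : ℕ) + 1 := rfl
      omega
    refine ⟨lam, ⟨⟨?_, ?_, ?_⟩, hform⟩, ?_⟩
    · -- decreasing
      apply adj_antitone
      intro j j' hjj'
      have hstep := (lemB34 hmono h1 h2 hpair j j' hjj').1
      have := hlamval j; have := hlamval j'
      have := hlamZval j; have := hlamZval j'
      omega
    · -- bounded by 2n - k
      intro i
      have := lemB2 hmono h1 h2 i
      have := hlamval i; have := hlamZval i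
      have := h2 i
      omega
    · -- strictness above n - k
      intro j hj1 hgt
      set j' : Fin k := ⟨(j:ℕ)+1, hj1⟩ with hj'
      have hj'val : (j':ℕ) = (j:ℕ)+1 := rfl
      have hajn : aN j ≤ n := by
        by_contra hc
        push_neg at hc
        have := lemB2' hmono h2 hpair j hc
        have := hlamval j; have := hlamZval j
        have := h2 j
        omega
      have hstep := (lemB34 hmono h1 h2 hpair j j' hj'val).2 hajn
      have := hlamval j; have := hlamval j'
      have := hlamZval j; have := hlamZval j'
      omega
    · -- uniqueness
      rintro lam' ⟨-, hform'⟩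
      funext j
      have e1 := hform' j
      have e2 := hform j
      rw [hnc j] at e1 e2
      omega
  · -- Part 2 : λ ↦ u
    intro lam hlam
    obtain ⟨hdec, hbound, hstrict⟩ := hlam
    have hb := fun j => lemF6 (lam := lam) hk hbound j
    set aN : Fin k → ℕ := fun j => (aZt n lam j).toNat with haN
    have haNval : ∀ j, (aN j : ℤ) = aZt n lam j := by
      intro j
      exact Int.toNat_of_nonneg (by have := (hb j).1; omega)
    have h1 : ∀ j, 1 ≤ aN j := by
      intro j; have := (hb j).1; have := haNval j; omega
    have h2 : ∀ j, aN j ≤ 2*n := by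
      intro j; have := (hb j).2; have := haNval j; omega
    have hmono : StrictMono aN := by
      apply adj_strictMono
      intro j j' hjj'
      have := lemF5 hdec hstrict hk j j' hjj'
      have := haNval j; have := haNval j'
      omega
    have hpair : ∀ i j, aN i + aN j ≠ 2*n+1 := by
      have hcase : ∀ i j : Fin k, i < j → aN i + aN j ≠ 2*n+1 := by
        intro i j hij
        obtain ⟨hF1, hF2⟩ := lemF4 hk hdec hstrict i j hij
        have ei := haNval i; have ej := haNval j
        by_cases hc : lam i + lam j ≤ 2*(n-k) + (j:ℕ) - (i:ℕ)
        · have := hF1 hc; omega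
        · have := hF2 hc; omega
      intro i j
      rcases lt_trichotomy i j with h | h | h
      · exact hcase i j h
      · subst h; omega
      · have := hcase j i h; omega
    obtain ⟨u, huW, huval⟩ := buildPerm hk aN h1 h2 hmono hpair
    have hncd : ∀ j : Fin k, {i : Fin k | i < j ∧
        lam i + lam j ≤ 2 * (n - k) + (j:ℕ) - (i:ℕ)}.ncard = dCt n lam j := by
      intro j
      rw [dCt]
      exact ncard_eq_filter_card _
    have hwform : wFormula n k hk2 lam u := by
      intro j
      rw [hncd j]
      have hv := huval (Fin.castLE hk2 j) j rfl
      have := haNval j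
      rw [aZt] at this
      omega
    refine ⟨u, ⟨huW, hwform⟩, ?_⟩
    rintro u' ⟨hu'W, hu'form⟩
    apply WP_ext hk hu'W huW
    intro p hpk
    have hcast : Fin.castLE hk2 ⟨(p:ℕ), hpk⟩ = p := Fin.ext rfl
    have e1 := hu'form ⟨(p:ℕ), hpk⟩
    have e2 := hwform ⟨(p:ℕ), hpk⟩
    rw [hcast] at e1 e2
    have : (u' p : ℕ) = (u p : ℕ) := by omega
    exact Fin.ext this
  · -- Part 3 : equivalence of the formulas
    intro lam hlam u hu
    obtain ⟨hdec, hbound, hstrict⟩ := hlam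
    set aN : Fin k → ℕ := fun j => (u (Fin.castLE hk2 j) : ℕ) + 1 with haN
    obtain ⟨hmono, h1, h2, hpair⟩ := aN_facts hk hk2 hu (aN := aN) (fun j => rfl)
    have hncc : ∀ j : Fin k, {i : Fin k | i < j ∧
        2 * n + 1 < ((u (Fin.castLE hk2 i) : ℕ) + 1) + ((u (Fin.castLE hk2 j) : ℕ) + 1)}.ncard
        = cCt n aN j := by
      intro j
      rw [cCt]
      exact ncard_eq_filter_card _
    have hncd : ∀ j : Fin k, {i : Fin k | i < j ∧
        lam i + lam j ≤ 2 * (n - k) + (j:ℕ) - (i:ℕ)}.ncard = dCt n lam j := by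
      intro j
      rw [dCt]
      exact ncard_eq_filter_card _
    have hdceq : (∀ i j : Fin k, i < j →
        ((lam i + lam j ≤ 2*(n-k) + (j:ℕ) - (i:ℕ)) ↔ (2*n+1 < aN i + aN j))) →
        ∀ j, dCt n lam j = cCt n aN j := by
      intro hiff j
      rw [dCt, cCt]
      congr 1
      apply Finset.filter_congr
      intro i _
      exact and_congr_right (fun hij => hiff i j hij)
    constructor
    · -- lamFormula → wFormula
      intro hform
      have hrel : ∀ j, (lam j : ℤ) = 2*(n:ℤ)+1 - k - aN j + cCt n aN j := by
        intro j
        have := hform j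
        rw [hncc j] at this
        have ea : aN j = (u (Fin.castLE hk2 j) : ℕ) + 1 := rfl
        omega
      have hiff : ∀ i j : Fin k, i < j →
          ((lam i + lam j ≤ 2*(n-k) + (j:ℕ) - (i:ℕ)) ↔ (2*n+1 < aN i + aN j)) := by
        intro i j hij
        have hval : (i:ℕ) < (j:ℕ) := hij
        have e1 := hrel i; have e2 := hrel j
        constructor
        · intro hc
          by_contra hnc2
          have := lemB5b hmono h2 hpair i j hij hnc2
          omega
        · intro hc
          have := lemB5a hmono h1 h2 hpair i j hij hc
          omega
      have hdc := hdceq hiff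
      intro j
      rw [hncd j, hdc j]
      have := hrel j
      have ea : aN j = (u (Fin.castLE hk2 j) : ℕ) + 1 := rfl
      omega
    · -- wFormula → lamFormula
      intro hform
      have hrel2 : ∀ j, (aN j : ℤ) = aZt n lam j := by
        intro j
        have := hform j
        rw [hncd j] at this
        rw [aZt]
        have ea : aN j = (u (Fin.castLE hk2 j) : ℕ) + 1 := rfl
        omega
      have hiff : ∀ i j : Fin k, i < j →
          ((lam i + lam j ≤ 2*(n-k) + (j:ℕ) - (i:ℕ)) ↔ (2*n+1 < aN i + aN j)) := by
        intro i j hij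
        obtain ⟨hF1, hF2⟩ := lemF4 hk hdec hstrict i j hij
        have e1 := hrel2 i; have e2 := hrel2 j
        constructor
        · intro hc
          have := hF1 hc
          omega
        · intro hc
          by_contra hnc2
          have := hF2 hnc2
          omega
      have hdc := hdceq hiff
      intro j
      rw [hncc j, ← hdc j]
      have := hform j
      rw [hncd j] at this
      have ea : aN j = (u (Fin.castLE hk2 j) : ℕ) + 1 := rfl
      omega
end
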